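/- arXiv:2411.03228 — 5 statements merged into one kernel-verified Lean document; each statement's English description precedes it below -/
import Mathlib

section
/- For every binary image S on an h×w grid and every real number ε with 0 < ε < 1/2, the thickened foreground D_ε(F(S)) strongly deformation retracts onto the foreground F(S). -/
open Set Metric

noncomputable section

/-- The plane modeled as `Fin 2 → ℝ` with the Pi (sup) norm. -/
abbrev Plane : Type := Fin 2 → ℝ

/-- The Euclidean plane (for Euclidean-norm disks and annuli). -/
abbrev EPlane : Type := EuclideanSpace ℝ (Fin 2)

/-- The closed unit pixel `[i-1,i] × [j-1,j]` for a pixel index `(i,j)`. -/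
def pixel (p : ℕ × ℕ) : Set Plane :=
  {x | x 0 ∈ Set.Icc ((p.1 : ℝ) - 1) (p.1 : ℝ) ∧ x 1 ∈ Set.Icc ((p.2 : ℝ) - 1) (p.2 : ℝ)}

/-- A binary image `S` lies on the `h × w` grid `{1,…,h} × {1,…,w}`. -/
def OnGrid (S : Set (ℕ × ℕ)) (h w : ℕ) : Prop :=
  S ⊆ Set.Icc 1 h ×ˢ Set.Icc 1 w

/-- The foreground `F(S)` of a binary image. -/
def fg (S : Set (ℕ × ℕ)) : Set Plane := ⋃ p ∈ S, pixel p

/-- Closed `ε`-thickening `D_ε(X)` with respect to the sup norm. -/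
def thick (ε : ℝ) (X : Set Plane) : Set Plane := {y | ∃ x ∈ X, ‖x - y‖ ≤ ε}

/-- `C` is a connected component of `A` (as a subset of the plane). -/
def IsCompOf (C A : Set Plane) : Prop := ∃ x ∈ A, C = connectedComponentIn A x

/-- Two subsets share a boundary edge if their closures intersect in an infinite set. -/
def SharesEdge (C D : Set Plane) : Prop := (closure C ∩ closure D).Infinite

/-- `X` strongly deformation retracts onto `A`. -/
def SDR (X A : Set Plane) : Prop :=
  ∃ H : C(↥X × unitInterval, ↥X),
    (∀ x, H (x, 0) = x) ∧ (∀ x, ((H (x, 1) : Plane)) ∈ A) ∧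
    (∀ a : ↥X, (a : Plane) ∈ A → ∀ t, H (a, t) = a)

def TPset (P G : Set (ℕ × ℕ)) (ε : ℝ) : Set Plane := thick ε (fg P) ∩ thick (2 * ε) (fg G)
def TNset (P G : Set (ℕ × ℕ)) (ε : ℝ) : Set Plane := (thick ε (fg P))ᶜ ∩ (thick (2 * ε) (fg G))ᶜ
def FPset (P G : Set (ℕ × ℕ)) (ε : ℝ) : Set Plane := thick ε (fg P) ∩ (thick (2 * ε) (fg G))ᶜ
def FNset (P G : Set (ℕ × ℕ)) (ε : ℝ) : Set Plane := (thick ε (fg P))ᶜ ∩ thick (2 * ε) (fg G)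

/-- A component `C` (of `FP` or `FN`) is regular: exactly one component of `TP` and exactly
one component of `TN` share a boundary edge with it. -/
def RegularComp (P G : Set (ℕ × ℕ)) (ε : ℝ) (C : Set Plane) : Prop :=
  (∃! T : Set Plane, IsCompOf T (TPset P G ε) ∧ SharesEdge T C) ∧
  (∃! T : Set Plane, IsCompOf T (TNset P G ε) ∧ SharesEdge T C)

/-- The zero-loss hypothesis: every component of `FP` and every component of `FN` is regular. -/
def ZeroLoss (P G : Set (ℕ × ℕ)) (ε : ℝ) : Prop :=
  (∀ C : Set Plane, IsCompOf C (FPset P G ε) → RegularComp P G ε C) ∧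
  (∀ C : Set Plane, IsCompOf C (FNset P G ε) → RegularComp P G ε C)

namespace SDRAux

def occ (S : Set (ℕ × ℕ)) (i j : ℤ) : Prop :=
  ∃ mn : ℕ × ℕ, mn ∈ S ∧ (mn.1 : ℤ) = i ∧ (mn.2 : ℤ) = j

def sg (b : Bool) : ℝ := if b then 1 else -1

def colS (k : ℤ) (b : Bool) : ℤ := if b then k + 1 else k

def fd (ε t : ℝ) : ℝ := max 0 (min 1 ((1/2 - t) / (1/2 - ε)))

open Classical in
def dd (O : ℤ → ℤ → Prop) (ε : ℝ) (k l : ℤ) (b₁ b₂ : Bool) (u v : ℝ) : ℝ :=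
  if O (colS k b₁) (colS l b₂) then 0 else
    sg b₁ * min (sg b₁ * (u - k))
      (if O (colS k b₁) (colS l (!b₂)) then
        (if O (colS k (!b₁)) (colS l b₂) then (sg b₂ * (v - l)) * fd ε (sg b₁ * (u - k)) else 0)
       else 1)

def pf (S : Set (ℕ × ℕ)) (ε : ℝ) (k l : ℤ) (b₁ b₂ : Bool) (y : Plane) : Plane :=
  ![y 0 - dd (occ S) ε k l b₁ b₂ (y 0) (y 1),
    y 1 - dd (fun j i => occ S i j) ε l k b₂ b₁ (y 1) (y 0)]

open Classical in
def bsel (k : ℤ) (x : ℝ) : Bool := if (k : ℝ) ≤ x then true else false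

def R (S : Set (ℕ × ℕ)) (ε : ℝ) (y : Plane) : Plane :=
  pf S ε (round (y 0)) (round (y 1)) (bsel (round (y 0)) (y 0)) (bsel (round (y 1)) (y 1)) y

def QC (k l : ℤ) (b₁ b₂ : Bool) : Set Plane :=
  {y | sg b₁ * (y 0 - k) ∈ Icc (0:ℝ) (1/2) ∧ sg b₂ * (y 1 - l) ∈ Icc (0:ℝ) (1/2)}

/-! ### basic facts -/

@[simp] lemma sg_true : sg true = 1 := rfl
@[simp] lemma sg_false : sg false = -1 := rfl
@[simp] lemma colS_true (k : ℤ) : colS k true = k + 1 := rfl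
@[simp] lemma colS_false (k : ℤ) : colS k false = k := rfl

lemma sg_sq (b : Bool) : sg b * sg b = 1 := by cases b <;> norm_num

lemma fd_nonneg (ε t : ℝ) : 0 ≤ fd ε t := le_max_left _ _

lemma fd_le_one (ε t : ℝ) : fd ε t ≤ 1 := max_le (by norm_num) (min_le_left _ _)

lemma fd_eq_one {ε t : ℝ} (hε : ε < 1/2) (ht : t ≤ ε) : fd ε t = 1 := by
  have h1 : (0:ℝ) < 1/2 - ε := by linarith
  have : (1:ℝ) ≤ (1/2 - t) / (1/2 - ε) := (le_div_iff₀ h1).2 (by linarith)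
  rw [fd, min_eq_left this]
  exact max_eq_right (by norm_num)

lemma fd_half (ε : ℝ) : fd ε (1/2) = 0 := by
  have : (1/2 - 1/2 : ℝ) / (1/2 - ε) = 0 := by norm_num
  rw [fd, this]
  simp

lemma occ_pixel_mem {S : Set (ℕ × ℕ)} {i j : ℤ} {y : Plane} (hocc : occ S i j)
    (h0 : y 0 ∈ Icc ((i:ℝ) - 1) (i:ℝ)) (h1 : y 1 ∈ Icc ((j:ℝ) - 1) (j:ℝ)) : y ∈ fg S := by
  obtain ⟨mn, hmn, hi, hj⟩ := hocc
  refine mem_biUnion hmn ?_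
  have e1 : ((mn.1 : ℝ)) = (i:ℝ) := by exact_mod_cast congrArg (Int.cast : ℤ → ℝ) hi
  have e2 : ((mn.2 : ℝ)) = (j:ℝ) := by exact_mod_cast congrArg (Int.cast : ℤ → ℝ) hj
  exact ⟨by rw [e1]; exact h0, by rw [e2]; exact h1⟩

lemma fg_elim {S : Set (ℕ × ℕ)} {y : Plane} (hy : y ∈ fg S) :
    ∃ i j : ℤ, occ S i j ∧ y 0 ∈ Icc ((i:ℝ) - 1) (i:ℝ) ∧ y 1 ∈ Icc ((j:ℝ) - 1) (j:ℝ) := by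
  obtain ⟨mn, hmn, hy⟩ := mem_iUnion₂.1 hy
  exact ⟨mn.1, mn.2, ⟨mn, hmn, rfl, rfl⟩, by simpa using hy.1, by simpa using hy.2⟩

/-- the key axis lemma -/
lemma axis {k : ℤ} {b : Bool} {u x ε' : ℝ} {m : ℤ} (hε'0 : 0 ≤ ε') (hε' : ε' < 1/2)
    (hu : sg b * (u - k) ∈ Icc (0:ℝ) (1/2)) (hx : x ∈ Icc ((m:ℝ) - 1) (m:ℝ))
    (hd : |x - u| ≤ ε') :
    m = colS k b ∨ (m = colS k (!b) ∧ sg b * (u - k) ≤ ε') := by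
  obtain ⟨hu0, hu2⟩ := hu
  obtain ⟨hx1, hx2⟩ := hx
  have hd1 : x - u ≤ ε' := (abs_le.1 hd).2
  have hd2 : -(ε') ≤ x - u := (abs_le.1 hd).1
  cases b with
  | true =>
    simp only [sg_true, one_mul, colS_true, Bool.not_true, colS_false] at *
    have h1 : (k:ℝ) - 1 < m := by linarith
    have h2 : (m:ℝ) < (k:ℝ) + 2 := by linarith
    have h1' : k - 1 < m := by exact_mod_cast h1
    have h2' : m < k + 2 := by exact_mod_cast h2
    rcases eq_or_lt_of_le (show k ≤ m by omega) with he | hlt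
    · right
      refine ⟨by omega, ?_⟩
      have hm : (m:ℝ) = k := by exact_mod_cast he.symm
      linarith [hm ▸ hx2]
    · left; omega
  | false =>
    simp only [sg_false, neg_mul, one_mul, colS_false, Bool.not_false, colS_true] at *
    have h1 : (k:ℝ) - 1 < m := by linarith
    have h2 : (m:ℝ) < (k:ℝ) + 2 := by linarith
    have h1' : k - 1 < m := by exact_mod_cast h1
    have h2' : m < k + 2 := by exact_mod_cast h2
    rcases eq_or_lt_of_le (show m ≤ k + 1 by omega) with he | hlt
    · right
      refine ⟨by omega, ?_⟩
      have hm : (m:ℝ) = k + 1 := by exact_mod_cast he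
      linarith [hm ▸ hx1]
    · left; omega


/-- characterization of nearby occupied cells -/
lemma char {S : Set (ℕ × ℕ)} {ε' : ℝ} {k l : ℤ} {b₁ b₂ : Bool} {y x : Plane}
    (hε'0 : 0 ≤ ε') (hε' : ε' < 1/2) (hy : y ∈ QC k l b₁ b₂) (hx : x ∈ fg S)
    (h0 : |x 0 - y 0| ≤ ε') (h1 : |x 1 - y 1| ≤ ε') :
    occ S (colS k b₁) (colS l b₂) ∨
    (occ S (colS k (!b₁)) (colS l b₂) ∧ sg b₁ * (y 0 - k) ≤ ε') ∨
    (occ S (colS k b₁) (colS l (!b₂)) ∧ sg b₂ * (y 1 - l) ≤ ε') ∨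
    (occ S (colS k (!b₁)) (colS l (!b₂)) ∧ sg b₁ * (y 0 - k) ≤ ε' ∧ sg b₂ * (y 1 - l) ≤ ε') := by
  obtain ⟨i, j, hocc, hx0, hx1⟩ := fg_elim hx
  rcases axis hε'0 hε' hy.1 hx0 h0 with hc | ⟨hc, hp⟩ <;>
    rcases axis hε'0 hε' hy.2 hx1 h1 with hr | ⟨hr, hq⟩
  · exact Or.inl (hc ▸ hr ▸ hocc)
  · exact Or.inr (Or.inr (Or.inl ⟨hc ▸ hr ▸ hocc, hq⟩))
  · exact Or.inr (Or.inl ⟨hc ▸ hr ▸ hocc, hp⟩)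
  · exact Or.inr (Or.inr (Or.inr ⟨hc ▸ hr ▸ hocc, hp, hq⟩))

lemma abs_comp_le_norm (z : Plane) (i : Fin 2) : |z i| ≤ ‖z‖ := by
  simpa [Real.norm_eq_abs] using norm_le_pi_norm z i

/-- characterization for points of the thickening -/
lemma charD {S : Set (ℕ × ℕ)} {ε : ℝ} {k l : ℤ} {b₁ b₂ : Bool} {y : Plane}
    (hε0 : 0 ≤ ε) (hε : ε < 1/2) (hy : y ∈ QC k l b₁ b₂) (hD : y ∈ thick ε (fg S)) :
    occ S (colS k b₁) (colS l b₂) ∨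
    (occ S (colS k (!b₁)) (colS l b₂) ∧ sg b₁ * (y 0 - k) ≤ ε) ∨
    (occ S (colS k b₁) (colS l (!b₂)) ∧ sg b₂ * (y 1 - l) ≤ ε) ∨
    (occ S (colS k (!b₁)) (colS l (!b₂)) ∧ sg b₁ * (y 0 - k) ≤ ε ∧ sg b₂ * (y 1 - l) ≤ ε) := by
  obtain ⟨x, hx, hn⟩ := hD
  have h0 : |x 0 - y 0| ≤ ε := by
    have := abs_comp_le_norm (x - y) 0
    simpa using this.trans hn
  have h1 : |x 1 - y 1| ≤ ε := by
    have := abs_comp_le_norm (x - y) 1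
    simpa using this.trans hn
  exact char hε0 hε hy hx h0 h1

/-- characterization for points of the foreground -/
lemma charF {S : Set (ℕ × ℕ)} {k l : ℤ} {b₁ b₂ : Bool} {y : Plane}
    (hy : y ∈ QC k l b₁ b₂) (hF : y ∈ fg S) :
    occ S (colS k b₁) (colS l b₂) ∨
    (occ S (colS k (!b₁)) (colS l b₂) ∧ sg b₁ * (y 0 - k) = 0) ∨
    (occ S (colS k b₁) (colS l (!b₂)) ∧ sg b₂ * (y 1 - l) = 0) ∨
    (occ S (colS k (!b₁)) (colS l (!b₂)) ∧ sg b₁ * (y 0 - k) = 0 ∧ sg b₂ * (y 1 - l) = 0) := by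
  have h := char (S := S) (ε' := 0) le_rfl (by norm_num) hy hF
      (x := y) (by simp) (by simp)
  have e1 : sg b₁ * (y 0 - k) ≤ 0 → sg b₁ * (y 0 - k) = 0 := fun h' => le_antisymm h' hy.1.1
  have e2 : sg b₂ * (y 1 - l) ≤ 0 → sg b₂ * (y 1 - l) = 0 := fun h' => le_antisymm h' hy.2.1
  rcases h with h | ⟨h, hp⟩ | ⟨h, hq⟩ | ⟨h, hp, hq⟩
  · exact Or.inl h
  · exact Or.inr (Or.inl ⟨h, e1 hp⟩)
  · exact Or.inr (Or.inr (Or.inl ⟨h, e2 hq⟩))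
  · exact Or.inr (Or.inr (Or.inr ⟨h, e1 hp, e2 hq⟩))


lemma land_own {k : ℤ} {b : Bool} {u : ℝ} (h : sg b * (u - (k:ℝ)) ∈ Icc (0:ℝ) (1/2)) :
    u ∈ Icc ((colS k b : ℝ) - 1) (colS k b : ℝ) := by
  obtain ⟨h1, h2⟩ := h
  cases b <;> simp only [sg_true, sg_false, colS_true, colS_false, one_mul, neg_mul] at * <;>
    push_cast <;> constructor <;> linarith

lemma land_line {k : ℤ} (b : Bool) : (k:ℝ) ∈ Icc ((colS k b : ℝ) - 1) (colS k b : ℝ) := by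
  cases b <;> simp only [colS_true, colS_false] <;> push_cast <;> constructor <;> linarith

lemma pf_apply0 (S : Set (ℕ × ℕ)) (ε : ℝ) (k l : ℤ) (b₁ b₂ : Bool) (y : Plane) :
    pf S ε k l b₁ b₂ y 0 = y 0 - dd (occ S) ε k l b₁ b₂ (y 0) (y 1) := rfl

lemma pf_apply1 (S : Set (ℕ × ℕ)) (ε : ℝ) (k l : ℤ) (b₁ b₂ : Bool) (y : Plane) :
    pf S ε k l b₁ b₂ y 1 = y 1 - dd (fun j i => occ S i j) ε l k b₂ b₁ (y 1) (y 0) := rfl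

open Classical in
lemma dd_eval1 (S : Set (ℕ × ℕ)) (ε : ℝ) (k l : ℤ) (b₁ b₂ : Bool) (y : Plane) :
    dd (occ S) ε k l b₁ b₂ (y 0) (y 1) =
      if occ S (colS k b₁) (colS l b₂) then 0 else
        sg b₁ * min (sg b₁ * (y 0 - k))
          (if occ S (colS k b₁) (colS l (!b₂)) then
            (if occ S (colS k (!b₁)) (colS l b₂) then
              (sg b₂ * (y 1 - l)) * fd ε (sg b₁ * (y 0 - k)) else 0)
           else 1) := rfl

open Classical in
lemma dd_eval2 (S : Set (ℕ × ℕ)) (ε : ℝ) (k l : ℤ) (b₁ b₂ : Bool) (y : Plane) :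
    dd (fun j i => occ S i j) ε l k b₂ b₁ (y 1) (y 0) =
      if occ S (colS k b₁) (colS l b₂) then 0 else
        sg b₂ * min (sg b₂ * (y 1 - l))
          (if occ S (colS k (!b₁)) (colS l b₂) then
            (if occ S (colS k b₁) (colS l (!b₂)) then
              (sg b₁ * (y 0 - k)) * fd ε (sg b₂ * (y 1 - l)) else 0)
           else 1) := rfl

lemma sgmul {b : Bool} {u c : ℝ} {k : ℤ} (h : sg b * (u - (k:ℝ)) = c) : u - sg b * c = k := by
  have hs := sg_sq b
  have : sg b * (sg b * (u - (k:ℝ))) = sg b * c := by rw [h]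
  rw [← mul_assoc, hs, one_mul] at this
  linarith

/-- the main landing and bound lemma -/
lemma pf_main {S : Set (ℕ × ℕ)} {ε : ℝ} {k l : ℤ} {b₁ b₂ : Bool} {y : Plane}
    (hε0 : 0 < ε) (hε : ε < 1/2) (hy : y ∈ QC k l b₁ b₂) (hD : y ∈ thick ε (fg S)) :
    pf S ε k l b₁ b₂ y ∈ fg S ∧
      |pf S ε k l b₁ b₂ y 0 - y 0| ≤ ε ∧ |pf S ε k l b₁ b₂ y 1 - y 1| ≤ ε := by
  classical
  obtain ⟨⟨hp0, hp2⟩, hq0, hq2⟩ := hy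
  set p := sg b₁ * (y 0 - k) with hpdef
  set q := sg b₂ * (y 1 - l) with hqdef
  by_cases hP1 : occ S (colS k b₁) (colS l b₂)
  · have h0 : pf S ε k l b₁ b₂ y 0 = y 0 := by
      rw [pf_apply0, dd_eval1, if_pos hP1]; ring
    have h1 : pf S ε k l b₁ b₂ y 1 = y 1 := by
      rw [pf_apply1, dd_eval2, if_pos hP1]; ring
    refine ⟨occ_pixel_mem hP1 ?_ ?_, ?_, ?_⟩
    · rw [h0]; exact land_own ⟨hp0, hp2⟩
    · rw [h1]; exact land_own ⟨hq0, hq2⟩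
    · rw [h0]; simpa using hε0.le
    · rw [h1]; simpa using hε0.le
  · set A₁ : ℝ := (if occ S (colS k b₁) (colS l (!b₂)) then
        (if occ S (colS k (!b₁)) (colS l b₂) then q * fd ε p else 0) else 1) with hA1def
    set A₂ : ℝ := (if occ S (colS k (!b₁)) (colS l b₂) then
        (if occ S (colS k b₁) (colS l (!b₂)) then p * fd ε q else 0) else 1) with hA2def
    have h0 : pf S ε k l b₁ b₂ y 0 = y 0 - sg b₁ * min p A₁ := by
      rw [pf_apply0, dd_eval1, if_neg hP1]
    have h1 : pf S ε k l b₁ b₂ y 1 = y 1 - sg b₂ * min q A₂ := by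
      rw [pf_apply1, dd_eval2, if_neg hP1]
    have hA₁0 : 0 ≤ A₁ := by
      rw [hA1def]; split_ifs with hh hh'
      · exact mul_nonneg hq0 (fd_nonneg _ _)
      · exact le_rfl
      · norm_num
    have hA₂0 : 0 ≤ A₂ := by
      rw [hA2def]; split_ifs with hh hh'
      · exact mul_nonneg hp0 (fd_nonneg _ _)
      · exact le_rfl
      · norm_num
    have hm10 : 0 ≤ min p A₁ := le_min hp0 hA₁0
    have hm20 : 0 ≤ min q A₂ := le_min hq0 hA₂0
    have habs1 : |pf S ε k l b₁ b₂ y 0 - y 0| = min p A₁ := by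
      rw [h0, show y 0 - sg b₁ * (min p A₁) - y 0 = -(sg b₁ * (min p A₁)) by ring, abs_neg,
        abs_mul]
      cases b₁ <;> simp [abs_of_nonneg hm10]
    have habs2 : |pf S ε k l b₁ b₂ y 1 - y 1| = min q A₂ := by
      rw [h1, show y 1 - sg b₂ * (min q A₂) - y 1 = -(sg b₂ * (min q A₂)) by ring, abs_neg,
        abs_mul]
      cases b₂ <;> simp [abs_of_nonneg hm20]
    have hchar := charD (S := S) hε0.le hε ⟨⟨hp0, hp2⟩, hq0, hq2⟩ hD
    rw [← hpdef, ← hqdef] at hchar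
    -- coordinates after moving
    have hc0 : ∀ c : ℝ, sg b₁ * (y 0 - sg b₁ * c - k) = p - c := by
      intro c
      have := sg_sq b₁
      calc sg b₁ * (y 0 - sg b₁ * c - k) = sg b₁ * (y 0 - k) - (sg b₁ * sg b₁) * c := by ring
        _ = p - c := by rw [this, hpdef]; ring
    have hc1 : ∀ c : ℝ, sg b₂ * (y 1 - sg b₂ * c - l) = q - c := by
      intro c
      have := sg_sq b₂
      calc sg b₂ * (y 1 - sg b₂ * c - l) = sg b₂ * (y 1 - l) - (sg b₂ * sg b₂) * c := by ring
        _ = q - c := by rw [this, hqdef]; ring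
    by_cases hP2 : occ S (colS k (!b₁)) (colS l b₂) <;>
      by_cases hP3 : occ S (colS k b₁) (colS l (!b₂))
    · -- both neighbours occupied
      have hA1 : A₁ = q * fd ε p := by rw [hA1def, if_pos hP3, if_pos hP2]
      have hA2 : A₂ = p * fd ε q := by rw [hA2def, if_pos hP2, if_pos hP3]
      have hpq : p ≤ ε ∨ q ≤ ε := by
        rcases hchar with h' | ⟨_, h'⟩ | ⟨_, h'⟩ | ⟨_, h', _⟩
        exacts [absurd h' hP1, Or.inl h', Or.inr h', Or.inl h']
      have hb1 : min p A₁ ≤ ε := by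
        rcases hpq with h' | h'
        · exact (min_le_left _ _).trans h'
        · refine (min_le_right _ _).trans ?_
          rw [hA1]
          calc q * fd ε p ≤ q * 1 := mul_le_mul_of_nonneg_left (fd_le_one _ _) hq0
            _ ≤ ε := by linarith
      have hb2 : min q A₂ ≤ ε := by
        rcases hpq with h' | h'
        · refine (min_le_right _ _).trans ?_
          rw [hA2]
          calc p * fd ε q ≤ p * 1 := mul_le_mul_of_nonneg_left (fd_le_one _ _) hp0
            _ ≤ ε := by linarith
        · exact (min_le_left _ _).trans h'
      have hkey : p ≤ A₁ ∨ q ≤ A₂ := by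
        by_contra hco
        push_neg at hco
        obtain ⟨h1', h2'⟩ := hco
        rcases hpq with h' | h'
        · rw [hA1, fd_eq_one hε h', mul_one] at h1'
          have hqε : q ≤ ε := by linarith
          rw [hA2, fd_eq_one hε hqε, mul_one] at h2'
          linarith
        · rw [hA2, fd_eq_one hε h', mul_one] at h2'
          have hpε : p ≤ ε := by linarith
          rw [hA1, fd_eq_one hε hpε, mul_one] at h1'
          linarith
      refine ⟨?_, by rw [habs1]; exact hb1, by rw [habs2]; exact hb2⟩
      rcases hkey with hk | hk
      · have hmin : min p A₁ = p := min_eq_left hk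
        have hcc : pf S ε k l b₁ b₂ y 0 = (k : ℝ) := by
          rw [h0, hmin]; exact sgmul hpdef.symm
        refine occ_pixel_mem hP2 (by rw [hcc]; exact land_line _) (land_own ?_)
        rw [h1, hc1]
        constructor
        · simp only [sub_nonneg]; exact min_le_left _ _
        · calc q - min q A₂ ≤ q := by linarith [hm20]
            _ ≤ 1/2 := hq2
      · have hmin : min q A₂ = q := min_eq_left hk
        have hcc : pf S ε k l b₁ b₂ y 1 = (l : ℝ) := by
          rw [h1, hmin]; exact sgmul hqdef.symm
        refine occ_pixel_mem hP3 (land_own ?_) (by rw [hcc]; exact land_line _)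
        rw [h0, hc0]
        constructor
        · simp only [sub_nonneg]; exact min_le_left _ _
        · calc p - min p A₁ ≤ p := by linarith [hm10]
            _ ≤ 1/2 := hp2
    · -- only horizontal neighbour
      have hA1 : A₁ = 1 := by rw [hA1def, if_neg hP3]
      have hA2 : A₂ = 0 := by rw [hA2def, if_pos hP2, if_neg hP3]
      have hmin1 : min p A₁ = p := min_eq_left (by rw [hA1]; linarith)
      have hmin2 : min q A₂ = 0 := by rw [hA2]; exact min_eq_right hq0
      have hcc : pf S ε k l b₁ b₂ y 0 = (k : ℝ) := by
        rw [h0, hmin1]; exact sgmul hpdef.symm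
      have hcc1 : pf S ε k l b₁ b₂ y 1 = y 1 := by rw [h1, hmin2]; ring
      have hpε : p ≤ ε := by
        rcases hchar with h' | ⟨_, h'⟩ | ⟨h', _⟩ | ⟨_, h', _⟩
        exacts [absurd h' hP1, h', absurd h' hP3, h']
      refine ⟨occ_pixel_mem hP2 (by rw [hcc]; exact land_line _)
        (by rw [hcc1]; exact land_own ⟨hq0, hq2⟩), ?_, ?_⟩
      · rw [habs1, hmin1]; exact hpε
      · rw [habs2, hmin2]; exact hε0.le
    · -- only vertical neighbour
      have hA1 : A₁ = 0 := by rw [hA1def, if_pos hP3, if_neg hP2]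
      have hA2 : A₂ = 1 := by rw [hA2def, if_neg hP2]
      have hmin1 : min p A₁ = 0 := by rw [hA1]; exact min_eq_right hp0
      have hmin2 : min q A₂ = q := min_eq_left (by rw [hA2]; linarith)
      have hcc : pf S ε k l b₁ b₂ y 1 = (l : ℝ) := by
        rw [h1, hmin2]; exact sgmul hqdef.symm
      have hcc0 : pf S ε k l b₁ b₂ y 0 = y 0 := by rw [h0, hmin1]; ring
      have hqε : q ≤ ε := by
        rcases hchar with h' | ⟨h', _⟩ | ⟨_, h'⟩ | ⟨_, _, h'⟩
        exacts [absurd h' hP1, absurd h' hP2, h', h']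
      refine ⟨occ_pixel_mem hP3 (by rw [hcc0]; exact land_own ⟨hp0, hp2⟩)
        (by rw [hcc]; exact land_line _), ?_, ?_⟩
      · rw [habs1, hmin1]; exact hε0.le
      · rw [habs2, hmin2]; exact hqε
    · -- only diagonal neighbour
      have hA1 : A₁ = 1 := by rw [hA1def, if_neg hP3]
      have hA2 : A₂ = 1 := by rw [hA2def, if_neg hP2]
      have hmin1 : min p A₁ = p := min_eq_left (by rw [hA1]; linarith)
      have hmin2 : min q A₂ = q := min_eq_left (by rw [hA2]; linarith)
      have hP4 : occ S (colS k (!b₁)) (colS l (!b₂)) ∧ p ≤ ε ∧ q ≤ ε := by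
        rcases hchar with h' | ⟨h', _⟩ | ⟨h', _⟩ | h'
        exacts [absurd h' hP1, absurd h' hP2, absurd h' hP3, h']
      have hcc0 : pf S ε k l b₁ b₂ y 0 = (k : ℝ) := by
        rw [h0, hmin1]; exact sgmul hpdef.symm
      have hcc1 : pf S ε k l b₁ b₂ y 1 = (l : ℝ) := by
        rw [h1, hmin2]; exact sgmul hqdef.symm
      refine ⟨occ_pixel_mem hP4.1 (by rw [hcc0]; exact land_line _)
        (by rw [hcc1]; exact land_line _), ?_, ?_⟩
      · rw [habs1, hmin1]; exact hP4.2.1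
      · rw [habs2, hmin2]; exact hP4.2.2


/-- points of the foreground are fixed -/
lemma pf_id {S : Set (ℕ × ℕ)} {ε : ℝ} {k l : ℤ} {b₁ b₂ : Bool} {y : Plane}
    (hy : y ∈ QC k l b₁ b₂) (hF : y ∈ fg S) : pf S ε k l b₁ b₂ y = y := by
  classical
  obtain ⟨⟨hp0, hp2⟩, hq0, hq2⟩ := hy
  set p := sg b₁ * (y 0 - k) with hpdef
  set q := sg b₂ * (y 1 - l) with hqdef
  have hfd0 : ∀ t : ℝ, 0 ≤ fd ε t := fd_nonneg ε
  have key : dd (occ S) ε k l b₁ b₂ (y 0) (y 1) = 0 ∧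
      dd (fun j i => occ S i j) ε l k b₂ b₁ (y 1) (y 0) = 0 := by
    rw [dd_eval1, dd_eval2]
    by_cases hP1 : occ S (colS k b₁) (colS l b₂)
    · rw [if_pos hP1, if_pos hP1]; exact ⟨rfl, rfl⟩
    rw [if_neg hP1, if_neg hP1]
    rcases charF ⟨⟨hp0, hp2⟩, hq0, hq2⟩ hF with h' | ⟨hP2, hp⟩ | ⟨hP3, hq⟩ | ⟨hP4, hp, hq⟩
    · exact absurd h' hP1
    · rw [← hpdef, ← hqdef] at *
      constructor
      · rw [hp]
        have : 0 ≤ (if occ S (colS k b₁) (colS l !b₂) then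
            (if occ S (colS k (!b₁)) (colS l b₂) then q * fd ε 0 else 0) else 1) := by
          split_ifs <;>
            first
              | exact mul_nonneg hq0 (hfd0 _)
              | norm_num
        rw [min_eq_left this, mul_zero]
      · rw [if_pos hP2, hp]
        have : (if occ S (colS k b₁) (colS l !b₂) then (0:ℝ) * fd ε q else 0) = 0 := by
          split_ifs <;> simp
        rw [this, min_eq_right hq0, mul_zero]
    · rw [← hpdef, ← hqdef] at *
      constructor
      · rw [if_pos hP3, hq]
        have : (if occ S (colS k (!b₁)) (colS l b₂) then (0:ℝ) * fd ε p else 0) = 0 := by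
          split_ifs <;> simp
        rw [this, min_eq_right hp0, mul_zero]
      · rw [hq]
        have : 0 ≤ (if occ S (colS k (!b₁)) (colS l b₂) then
            (if occ S (colS k b₁) (colS l (!b₂)) then p * fd ε 0 else 0) else 1) := by
          split_ifs <;>
            first
              | exact mul_nonneg hp0 (hfd0 _)
              | norm_num
        rw [min_eq_left this, mul_zero]
    · rw [← hpdef, ← hqdef] at *
      constructor
      · rw [hp]
        have : 0 ≤ (if occ S (colS k b₁) (colS l !b₂) then
            (if occ S (colS k (!b₁)) (colS l b₂) then q * fd ε 0 else 0) else 1) := by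
          split_ifs <;>
            first
              | exact mul_nonneg hq0 (hfd0 _)
              | norm_num
        rw [min_eq_left this, mul_zero]
      · rw [hq]
        have : 0 ≤ (if occ S (colS k (!b₁)) (colS l b₂) then
            (if occ S (colS k b₁) (colS l (!b₂)) then p * fd ε 0 else 0) else 1) := by
          split_ifs <;>
            first
              | exact mul_nonneg hp0 (hfd0 _)
              | norm_num
        rw [min_eq_left this, mul_zero]
  funext i
  fin_cases i
  · rw [show (⟨0, by norm_num⟩ : Fin 2) = (0 : Fin 2) from rfl, pf_apply0, key.1]; ring
  · rw [show (⟨1, by norm_num⟩ : Fin 2) = (1 : Fin 2) from rfl, pf_apply1, key.2]; ring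


/-! ### agreement lemmas for gluing -/

lemma dd_p0 {O : ℤ → ℤ → Prop} {ε : ℝ} {k l : ℤ} {b₁ b₂ : Bool} {u v : ℝ}
    (hu : u = (k:ℝ)) (hq : 0 ≤ sg b₂ * (v - l)) : dd O ε k l b₁ b₂ u v = 0 := by
  classical
  rw [dd]
  split_ifs with h1 h2 h3
  · rfl
  · rw [hu, sub_self, mul_zero]
    rw [min_eq_left (mul_nonneg hq (fd_nonneg _ _)), mul_zero]
  · rw [hu, sub_self, mul_zero, min_eq_left le_rfl, mul_zero]
  · rw [hu, sub_self, mul_zero, min_eq_left (by norm_num : (0:ℝ) ≤ 1), mul_zero]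

lemma dd_flip_other {O : ℤ → ℤ → Prop} {ε : ℝ} {k l : ℤ} {b₁ b₂ : Bool} {u v : ℝ}
    (hv : v = (l:ℝ)) (hp : 0 ≤ sg b₁ * (u - k)) :
    dd O ε k l b₁ b₂ u v = dd O ε k l b₁ (!b₂) u v := by
  classical
  rw [dd, dd, Bool.not_not]
  simp only [hv, sub_self, mul_zero, zero_mul]
  by_cases h1 : O (colS k b₁) (colS l b₂) <;> by_cases h2 : O (colS k b₁) (colS l (!b₂))
  · rw [if_pos h1, if_pos h2]
  · rw [if_pos h1, if_neg h2, if_pos h1]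
    split_ifs <;> rw [min_eq_right hp, mul_zero]
  · rw [if_neg h1, if_pos h2, if_pos h2]
    split_ifs <;> rw [min_eq_right hp, mul_zero]
  · rw [if_neg h1, if_neg h2, if_neg h2, if_neg h1]

lemma dd_half {O : ℤ → ℤ → Prop} {ε : ℝ} {k l : ℤ} {b₁ b₂ : Bool} {u v : ℝ}
    (hu : sg b₁ * (u - k) = 1/2)
    (hOC : O (colS k b₁) (colS l b₂) ∨ O (colS k b₁) (colS l (!b₂))) :
    dd O ε k l b₁ b₂ u v = 0 := by
  classical
  rw [dd]
  rcases hOC with h | h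
  · rw [if_pos h]
  · by_cases h1 : O (colS k b₁) (colS l b₂)
    · rw [if_pos h1]
    · rw [if_neg h1, if_pos h, hu, fd_half]
      have h2 : (if O (colS k (!b₁)) (colS l b₂) then (sg b₂ * (v - l)) * 0 else (0:ℝ)) = 0 := by
        split_ifs <;> ring
      rw [h2, min_eq_right (by norm_num : (0:ℝ) ≤ 1/2), mul_zero]

lemma dd_shift_other {O : ℤ → ℤ → Prop} {ε : ℝ} {k l l' : ℤ} {b₁ b₂ b₂' : Bool} {u v : ℝ}
    (hcol : colS l' b₂' = colS l b₂)
    (hocc : O (colS k b₁) (colS l b₂) ∨ (O (colS k (!b₁)) (colS l b₂) ∧ sg b₁ * (u - k) ≤ ε))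
    (hp0 : 0 ≤ sg b₁ * (u - k)) (hε : ε < 1/2)
    (hv : sg b₂ * (v - l) = 1/2) (hv' : sg b₂' * (v - l') = 1/2) :
    dd O ε k l b₁ b₂ u v = dd O ε k l' b₁ b₂' u v := by
  classical
  rw [dd, dd, hcol, hv, hv']
  rcases hocc with h | ⟨h, hpε⟩
  · rw [if_pos h, if_pos h]
  · by_cases h1 : O (colS k b₁) (colS l b₂)
    · rw [if_pos h1, if_pos h1]
    · rw [if_neg h1, if_neg h1, if_pos h]
      have hfp : fd ε (sg b₁ * (u - k)) = 1 := fd_eq_one hε hpε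
      have hle : sg b₁ * (u - k) ≤ 1/2 * 1 := by rw [hfp] at *; linarith
      rw [hfp]
      split_ifs with h2 h3 h3
      · rfl
      · rw [min_eq_left (by linarith), min_eq_left (by norm_num at hle ⊢; linarith)]
      · rw [min_eq_left (by norm_num at hle ⊢; linarith), min_eq_left (by linarith)]
      · rfl


lemma pf_ext {S : Set (ℕ × ℕ)} {ε : ℝ} {k l k' l' : ℤ} {b₁ b₂ b₁' b₂' : Bool} {y : Plane}
    (h0 : dd (occ S) ε k l b₁ b₂ (y 0) (y 1) = dd (occ S) ε k' l' b₁' b₂' (y 0) (y 1))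
    (h1 : dd (fun j i => occ S i j) ε l k b₂ b₁ (y 1) (y 0)
        = dd (fun j i => occ S i j) ε l' k' b₂' b₁' (y 1) (y 0)) :
    pf S ε k l b₁ b₂ y = pf S ε k' l' b₁' b₂' y := by
  funext i
  fin_cases i
  · show pf S ε k l b₁ b₂ y 0 = pf S ε k' l' b₁' b₂' y 0
    rw [pf_apply0, pf_apply0, h0]
  · show pf S ε k l b₁ b₂ y 1 = pf S ε k' l' b₁' b₂' y 1
    rw [pf_apply1, pf_apply1, h1]

lemma pf_flip1 {S : Set (ℕ × ℕ)} {ε : ℝ} {k l : ℤ} {b₁ b₂ : Bool} {y : Plane}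
    (h0 : y 0 = (k:ℝ)) (hq : 0 ≤ sg b₂ * (y 1 - l)) :
    pf S ε k l b₁ b₂ y = pf S ε k l (!b₁) b₂ y := by
  refine pf_ext ?_ ?_
  · rw [dd_p0 h0 hq, dd_p0 h0 hq]
  · exact dd_flip_other h0 hq

lemma pf_flip2 {S : Set (ℕ × ℕ)} {ε : ℝ} {k l : ℤ} {b₁ b₂ : Bool} {y : Plane}
    (h1 : y 1 = (l:ℝ)) (hp : 0 ≤ sg b₁ * (y 0 - k)) :
    pf S ε k l b₁ b₂ y = pf S ε k l b₁ (!b₂) y := by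
  refine pf_ext ?_ ?_
  · exact dd_flip_other h1 hp
  · rw [dd_p0 h1 hp, dd_p0 h1 hp]

lemma pf_half1 {S : Set (ℕ × ℕ)} {ε : ℝ} {k l : ℤ} {b₂ : Bool} {y : Plane}
    (hε0 : 0 < ε) (hε : ε < 1/2) (h0 : y 0 = (k:ℝ) + 1/2)
    (hq : sg b₂ * (y 1 - l) ∈ Icc (0:ℝ) (1/2)) (hD : y ∈ thick ε (fg S)) :
    pf S ε k l true b₂ y = pf S ε (k+1) l false b₂ y := by
  have hpT : sg true * (y 0 - k) = 1/2 := by rw [sg_true, h0]; ring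
  have hpF : sg false * (y 0 - (k+1:ℤ)) = 1/2 := by rw [sg_false]; push_cast; rw [h0]; ring
  have hy : y ∈ QC k l true b₂ := ⟨by rw [hpT]; exact ⟨by norm_num, le_rfl⟩, hq⟩
  have hcol : colS (k+1) false = colS k true := by simp
  have hCV : occ S (colS k true) (colS l b₂) ∨
      (occ S (colS k true) (colS l (!b₂)) ∧ sg b₂ * (y 1 - l) ≤ ε) := by
    rcases charD hε0.le hε hy hD with h' | ⟨_, h'⟩ | h' | ⟨_, h', _⟩
    · exact Or.inl h'
    · rw [hpT] at h'; linarith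
    · exact Or.inr h'
    · rw [hpT] at h'; linarith
  refine pf_ext ?_ ?_
  · rw [dd_half hpT (hCV.imp id And.left), dd_half hpF ?_]
    rw [hcol]
    exact hCV.imp id And.left
  · refine dd_shift_other hcol ?_ hq.1 hε hpT hpF
    exact hCV.imp id (fun h' => ⟨h'.1, h'.2⟩)

lemma pf_half2 {S : Set (ℕ × ℕ)} {ε : ℝ} {k l : ℤ} {b₁ : Bool} {y : Plane}
    (hε0 : 0 < ε) (hε : ε < 1/2) (h1 : y 1 = (l:ℝ) + 1/2)
    (hp : sg b₁ * (y 0 - k) ∈ Icc (0:ℝ) (1/2)) (hD : y ∈ thick ε (fg S)) :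
    pf S ε k l b₁ true y = pf S ε k (l+1) b₁ false y := by
  have hqT : sg true * (y 1 - l) = 1/2 := by rw [sg_true, h1]; ring
  have hqF : sg false * (y 1 - (l+1:ℤ)) = 1/2 := by rw [sg_false]; push_cast; rw [h1]; ring
  have hy : y ∈ QC k l b₁ true := ⟨hp, by rw [hqT]; exact ⟨by norm_num, le_rfl⟩⟩
  have hcol : colS (l+1) false = colS l true := by simp
  have hCH : occ S (colS k b₁) (colS l true) ∨
      (occ S (colS k (!b₁)) (colS l true) ∧ sg b₁ * (y 0 - k) ≤ ε) := by
    rcases charD hε0.le hε hy hD with h' | h' | ⟨_, h'⟩ | ⟨_, _, h'⟩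
    · exact Or.inl h'
    · exact Or.inr h'
    · rw [hqT] at h'; linarith
    · rw [hqT] at h'; linarith
  refine pf_ext ?_ ?_
  · refine dd_shift_other hcol ?_ hp.1 hε hqT hqF
    exact hCH
  · rw [dd_half hqT ?_, dd_half hqF ?_]
    · rw [hcol]
      exact hCH.imp id And.left
    · exact hCH.imp id And.left


lemma sg_bsel_round (x : ℝ) :
    sg (bsel (round x) x) * (x - round x) = |x - round x| := by
  rw [bsel]
  split_ifs with h
  · rw [sg_true, one_mul, abs_of_nonneg (by linarith)]
  · rw [sg_false, abs_of_neg (by push_neg at h; linarith)]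
    ring

lemma mem_QC_round (y : Plane) :
    y ∈ QC (round (y 0)) (round (y 1)) (bsel (round (y 0)) (y 0)) (bsel (round (y 1)) (y 1)) := by
  constructor
  · rw [sg_bsel_round]
    exact ⟨abs_nonneg _, abs_sub_round _⟩
  · rw [sg_bsel_round]
    exact ⟨abs_nonneg _, abs_sub_round _⟩

lemma bool_flip {a b : Bool} (h : a ≠ b) : b = !a := by
  cases a <;> cases b <;> simp_all

lemma adjust1 {S : Set (ℕ × ℕ)} {ε : ℝ} {k l : ℤ} {b₁ b₂ : Bool} {y : Plane}
    (hε0 : 0 < ε) (hε : ε < 1/2) (hD : y ∈ thick ε (fg S)) (hy : y ∈ QC k l b₁ b₂) :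
    pf S ε k l b₁ b₂ y = pf S ε (round (y 0)) l (bsel (round (y 0)) (y 0)) b₂ y := by
  set k₀ := round (y 0) with hk₀
  set b := bsel (round (y 0)) (y 0) with hb
  have hQ0 : sg b * (y 0 - k₀) ∈ Icc (0:ℝ) (1/2) := by
    rw [hb, hk₀, sg_bsel_round]
    exact ⟨abs_nonneg _, abs_sub_round _⟩
  by_cases hk : k = k₀
  · subst hk
    by_cases hbb : b₁ = b
    · rw [hbb]
    · have hbb' : b = !b₁ := bool_flip hbb
      have h00 : y 0 = (k₀:ℝ) := by
        have h1 := hy.1.1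
        have h2 := hQ0.1
        rw [hbb'] at h2
        cases b₁ <;> simp only [sg_true, sg_false, Bool.not_true, Bool.not_false,
          one_mul, neg_mul] at h1 h2 <;> linarith
      rw [hbb']
      exact pf_flip1 h00 hy.2.1
  · have hd1 : |y 0 - k| ≤ 1/2 := by
      have h1 := hy.1.1
      have h2 := hy.1.2
      cases b₁ <;> simp only [sg_true, sg_false, one_mul, neg_mul] at h1 h2 <;>
        rw [abs_le] <;> constructor <;> linarith
    have hd2 : |y 0 - k₀| ≤ 1/2 := abs_sub_round _
    have hkk : k₀ = k + 1 ∨ k₀ = k - 1 := by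
      have h1 := abs_le.1 hd1
      have h2 := abs_le.1 hd2
      have : |(k:ℝ) - k₀| ≤ 1 := by rw [abs_le]; constructor <;> linarith
      have : |(k:ℤ) - k₀| ≤ 1 := by exact_mod_cast this
      rw [abs_le] at this
      omega
    rcases hkk with hkk | hkk
    · -- y 0 = k + 1/2
      have h00 : y 0 = (k:ℝ) + 1/2 := by
        have h1 := abs_le.1 hd1
        have h2 := abs_le.1 hd2
        have hc : (k₀:ℝ) = k + 1 := by exact_mod_cast hkk
        rw [hc] at h2
        linarith
      have hb₁ : b₁ = true := by
        by_contra hc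
        have : b₁ = false := by simpa using hc
        have h1 := hy.1.1
        rw [this, sg_false, h00] at h1
        norm_num at h1
      have hbf : b = false := by
        rw [hb, bsel, hk₀.symm, hkk]
        split_ifs with hc
        · exfalso
          rw [h00] at hc
          push_cast at hc
          linarith
        · rfl
      rw [hb₁, hbf, hkk]
      exact pf_half1 hε0 hε h00 hy.2 hD
    · -- y 0 = k - 1/2
      have h00 : y 0 = (k₀:ℝ) + 1/2 := by
        have h1 := abs_le.1 hd1
        have h2 := abs_le.1 hd2
        have hc : (k₀:ℝ) = k - 1 := by exact_mod_cast hkk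
        rw [hc] at h2 ⊢
        linarith
      have hb₁ : b₁ = false := by
        by_contra hc
        have hc' : b₁ = true := by simpa using hc
        have h1 := hy.1.1
        have hc2 : (k₀:ℝ) = k - 1 := by exact_mod_cast hkk
        rw [hc', sg_true, h00, hc2] at h1
        linarith
      have hbt : b = true := by
        rw [hb, bsel, hk₀.symm]
        split_ifs with hc
        · rfl
        · exfalso
          rw [h00] at hc
          push_cast at hc
          linarith
      have hq' : sg b₂ * (y 1 - l) ∈ Icc (0:ℝ) (1/2) := hy.2
      have := pf_half1 (S := S) (ε := ε) (k := k₀) (l := l) (b₂ := b₂)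
        hε0 hε h00 hq' hD
      rw [hb₁, hbt]
      rw [show k₀ + 1 = k by omega] at this
      exact this.symm

lemma adjust2 {S : Set (ℕ × ℕ)} {ε : ℝ} {k l : ℤ} {b₁ b₂ : Bool} {y : Plane}
    (hε0 : 0 < ε) (hε : ε < 1/2) (hD : y ∈ thick ε (fg S)) (hy : y ∈ QC k l b₁ b₂) :
    pf S ε k l b₁ b₂ y = pf S ε k (round (y 1)) b₁ (bsel (round (y 1)) (y 1)) y := by
  set l₀ := round (y 1) with hl₀
  set b := bsel (round (y 1)) (y 1) with hb
  have hQ0 : sg b * (y 1 - l₀) ∈ Icc (0:ℝ) (1/2) := by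
    rw [hb, hl₀, sg_bsel_round]
    exact ⟨abs_nonneg _, abs_sub_round _⟩
  by_cases hl : l = l₀
  · subst hl
    by_cases hbb : b₂ = b
    · rw [hbb]
    · have hbb' : b = !b₂ := bool_flip hbb
      have h00 : y 1 = (l₀:ℝ) := by
        have h1 := hy.2.1
        have h2 := hQ0.1
        rw [hbb'] at h2
        cases b₂ <;> simp only [sg_true, sg_false, Bool.not_true, Bool.not_false,
          one_mul, neg_mul] at h1 h2 <;> linarith
      rw [hbb']
      exact pf_flip2 h00 hy.1.1
  · have hd1 : |y 1 - l| ≤ 1/2 := by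
      have h1 := hy.2.1
      have h2 := hy.2.2
      cases b₂ <;> simp only [sg_true, sg_false, one_mul, neg_mul] at h1 h2 <;>
        rw [abs_le] <;> constructor <;> linarith
    have hd2 : |y 1 - l₀| ≤ 1/2 := abs_sub_round _
    have hll : l₀ = l + 1 ∨ l₀ = l - 1 := by
      have h1 := abs_le.1 hd1
      have h2 := abs_le.1 hd2
      have : |(l:ℝ) - l₀| ≤ 1 := by rw [abs_le]; constructor <;> linarith
      have : |(l:ℤ) - l₀| ≤ 1 := by exact_mod_cast this
      rw [abs_le] at this
      omega
    rcases hll with hll | hll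
    · have h00 : y 1 = (l:ℝ) + 1/2 := by
        have h1 := abs_le.1 hd1
        have h2 := abs_le.1 hd2
        have hc : (l₀:ℝ) = l + 1 := by exact_mod_cast hll
        rw [hc] at h2
        linarith
      have hb₂ : b₂ = true := by
        by_contra hc
        have : b₂ = false := by simpa using hc
        have h1 := hy.2.1
        rw [this, sg_false, h00] at h1
        norm_num at h1
      have hbf : b = false := by
        rw [hb, bsel, hl₀.symm, hll]
        split_ifs with hc
        · exfalso
          rw [h00] at hc
          push_cast at hc
          linarith
        · rfl
      rw [hb₂, hbf, hll]
      exact pf_half2 hε0 hε h00 hy.1 hD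
    · have h00 : y 1 = (l₀:ℝ) + 1/2 := by
        have h1 := abs_le.1 hd1
        have h2 := abs_le.1 hd2
        have hc : (l₀:ℝ) = l - 1 := by exact_mod_cast hll
        rw [hc] at h2 ⊢
        linarith
      have hb₂ : b₂ = false := by
        by_contra hc
        have hc' : b₂ = true := by simpa using hc
        have h1 := hy.2.1
        have hc2 : (l₀:ℝ) = l - 1 := by exact_mod_cast hll
        rw [hc', sg_true, h00, hc2] at h1
        linarith
      have hbt : b = true := by
        rw [hb, bsel, hl₀.symm]
        split_ifs with hc
        · rfl
        · exfalso
          rw [h00] at hc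
          push_cast at hc
          linarith
      have := pf_half2 (S := S) (ε := ε) (k := k) (l := l₀) (b₁ := b₁)
        hε0 hε h00 hy.1 hD
      rw [hb₂, hbt]
      rw [show l₀ + 1 = l by omega] at this
      exact this.symm

/-- any piece containing a point of the thickening computes `R` -/
lemma R_eq_pf {S : Set (ℕ × ℕ)} {ε : ℝ} {k l : ℤ} {b₁ b₂ : Bool} {y : Plane}
    (hε0 : 0 < ε) (hε : ε < 1/2) (hD : y ∈ thick ε (fg S)) (hy : y ∈ QC k l b₁ b₂) :
    R S ε y = pf S ε k l b₁ b₂ y := by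
  have step1 := adjust1 hε0 hε hD hy
  have hy1 : y ∈ QC (round (y 0)) l (bsel (round (y 0)) (y 0)) b₂ := by
    refine ⟨?_, hy.2⟩
    rw [sg_bsel_round]
    exact ⟨abs_nonneg _, abs_sub_round _⟩
  have step2 := adjust2 hε0 hε hD hy1
  rw [R, step1, step2]


/-! ### continuity -/

lemma cont_fd (ε : ℝ) : Continuous (fd ε) := by
  unfold fd
  exact continuous_const.max (continuous_const.min
    ((continuous_const.sub continuous_id).div_const _))

lemma cont_dd (O : ℤ → ℤ → Prop) (ε : ℝ) (k l : ℤ) (b₁ b₂ : Bool) (i j : Fin 2) :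
    Continuous (fun y : Plane => dd O ε k l b₁ b₂ (y i) (y j)) := by
  classical
  have hu : Continuous fun y : Plane => sg b₁ * (y i - k) :=
    continuous_const.mul ((continuous_apply i).sub continuous_const)
  have hv : Continuous fun y : Plane => sg b₂ * (y j - l) :=
    continuous_const.mul ((continuous_apply j).sub continuous_const)
  unfold dd
  by_cases h1 : O (colS k b₁) (colS l b₂) <;> simp only [h1, if_true, if_false]
  · exact continuous_const
  · by_cases h3 : O (colS k b₁) (colS l (!b₂)) <;> simp only [h3, if_true, if_false]
    · by_cases h2 : O (colS k (!b₁)) (colS l b₂) <;> simp only [h2, if_true, if_false]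
      · exact continuous_const.mul (hu.min (hv.mul ((cont_fd ε).comp hu)))
      · exact continuous_const.mul (hu.min continuous_const)
    · exact continuous_const.mul (hu.min continuous_const)

lemma cont_pf (S : Set (ℕ × ℕ)) (ε : ℝ) (k l : ℤ) (b₁ b₂ : Bool) :
    Continuous (pf S ε k l b₁ b₂) := by
  refine continuous_pi fun i => ?_
  fin_cases i
  · show Continuous fun y => pf S ε k l b₁ b₂ y 0
    simp only [pf_apply0]
    exact (continuous_apply 0).sub (cont_dd _ _ _ _ _ _ 0 1)
  · show Continuous fun y => pf S ε k l b₁ b₂ y 1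
    simp only [pf_apply1]
    exact (continuous_apply 1).sub (cont_dd _ _ _ _ _ _ 1 0)

lemma isClosed_QC (k l : ℤ) (b₁ b₂ : Bool) : IsClosed (QC k l b₁ b₂) := by
  have h1 : Continuous fun y : Plane => sg b₁ * (y 0 - k) :=
    continuous_const.mul ((continuous_apply 0).sub continuous_const)
  have h2 : Continuous fun y : Plane => sg b₂ * (y 1 - l) :=
    continuous_const.mul ((continuous_apply 1).sub continuous_const)
  exact (isClosed_Icc.preimage h1).inter (isClosed_Icc.preimage h2)

lemma clamp_spec {a b t ε : ℝ} (hε0 : 0 ≤ ε) (h1 : a - ε ≤ t) (h2 : t ≤ b + ε) (hab : a ≤ b) :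
    max a (min b t) ∈ Icc a b ∧ |max a (min b t) - t| ≤ ε := by
  refine ⟨⟨le_max_left _ _, max_le hab (min_le_left _ _)⟩, ?_⟩
  rcases le_total t a with hc | hc
  · rw [min_eq_right (hc.trans hab), max_eq_left hc, abs_of_nonneg (by linarith)]
    linarith
  · rcases le_total t b with hc2 | hc2
    · rw [min_eq_right hc2, max_eq_right hc]
      simpa using hε0
    · rw [min_eq_left hc2, max_eq_right hab, abs_of_nonpos (by linarith)]
      linarith

lemma thick_pixel_eq {ε : ℝ} (hε0 : 0 ≤ ε) (mn : ℕ × ℕ) :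
    thick ε (pixel mn) = {y : Plane | y 0 ∈ Icc ((mn.1:ℝ) - 1 - ε) ((mn.1:ℝ) + ε) ∧
      y 1 ∈ Icc ((mn.2:ℝ) - 1 - ε) ((mn.2:ℝ) + ε)} := by
  ext y
  constructor
  · rintro ⟨x, ⟨hx0, hx1⟩, hn⟩
    have h0 : |x 0 - y 0| ≤ ε := by
      have := abs_comp_le_norm (x - y) 0
      simpa using this.trans hn
    have h1 : |x 1 - y 1| ≤ ε := by
      have := abs_comp_le_norm (x - y) 1
      simpa using this.trans hn
    rw [abs_le] at h0 h1
    obtain ⟨hx0a, hx0b⟩ := hx0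
    obtain ⟨hx1a, hx1b⟩ := hx1
    exact ⟨⟨by linarith [h0.1, h0.2], by linarith [h0.1, h0.2]⟩,
      ⟨by linarith [h1.1, h1.2], by linarith [h1.1, h1.2]⟩⟩
  · rintro ⟨⟨h0a, h0b⟩, h1a, h1b⟩
    have c0 := clamp_spec (a := (mn.1:ℝ) - 1) (b := (mn.1:ℝ)) (t := y 0) hε0
      (by linarith) h0b (by linarith)
    have c1 := clamp_spec (a := (mn.2:ℝ) - 1) (b := (mn.2:ℝ)) (t := y 1) hε0
      (by linarith) h1b (by linarith)
    refine ⟨![max ((mn.1:ℝ) - 1) (min (mn.1:ℝ) (y 0)),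
      max ((mn.2:ℝ) - 1) (min (mn.2:ℝ) (y 1))], ⟨?_, ?_⟩, ?_⟩
    · simpa using c0.1
    · simpa using c1.1
    · rw [pi_norm_le_iff_of_nonneg hε0]
      rw [Fin.forall_fin_two]
      constructor
      · simpa using c0.2
      · simpa using c1.2

lemma thick_fg_eq (S : Set (ℕ × ℕ)) (ε : ℝ) :
    thick ε (fg S) = ⋃ mn ∈ S, thick ε (pixel mn) := by
  ext y
  constructor
  · rintro ⟨x, hx, hn⟩
    obtain ⟨mn, hmn, hxp⟩ := mem_iUnion₂.1 hx
    exact mem_iUnion₂.2 ⟨mn, hmn, x, hxp, hn⟩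
  · intro hy
    obtain ⟨mn, hmn, x, hxp, hn⟩ := mem_iUnion₂.1 hy
    exact ⟨x, mem_iUnion₂.2 ⟨mn, hmn, hxp⟩, hn⟩

lemma isClosed_thick {S : Set (ℕ × ℕ)} {ε : ℝ} (hfin : S.Finite) (hε0 : 0 ≤ ε) :
    IsClosed (thick ε (fg S)) := by
  rw [thick_fg_eq]
  refine Set.Finite.isClosed_biUnion hfin fun mn _ => ?_
  rw [thick_pixel_eq hε0]
  have h1 : Continuous fun y : Plane => y 0 := continuous_apply 0
  have h2 : Continuous fun y : Plane => y 1 := continuous_apply 1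
  exact (isClosed_Icc.preimage h1).inter (isClosed_Icc.preimage h2)


lemma round_bounds {S : Set (ℕ × ℕ)} {h w : ℕ} {ε : ℝ} {y : Plane}
    (hS : OnGrid S h w) (hε : ε < 1/2) (hD : y ∈ thick ε (fg S)) :
    round (y 0) ∈ Finset.Icc (0:ℤ) h ∧ round (y 1) ∈ Finset.Icc (0:ℤ) w := by
  obtain ⟨x, hx, hn⟩ := hD
  obtain ⟨mn, hmn, hxp⟩ := mem_iUnion₂.1 hx
  obtain ⟨hm, hw⟩ := hS hmn
  have hm1 : (1:ℕ) ≤ mn.1 := hm.1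
  have hm2 : mn.1 ≤ h := hm.2
  have hw1 : (1:ℕ) ≤ mn.2 := hw.1
  have hw2 : mn.2 ≤ w := hw.2
  have h0 : |x 0 - y 0| ≤ ε := by
    have := abs_comp_le_norm (x - y) 0
    simpa using this.trans hn
  have h1 : |x 1 - y 1| ≤ ε := by
    have := abs_comp_le_norm (x - y) 1
    simpa using this.trans hn
  rw [abs_le] at h0 h1
  obtain ⟨⟨ha0, hb0⟩, ha1, hb1⟩ := hxp
  have hy0a : -(1/2 : ℝ) < y 0 := by
    have : (1:ℝ) ≤ (mn.1 : ℝ) := by exact_mod_cast hm1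
    linarith [h0.1, h0.2]
  have hy0b : y 0 < (h:ℝ) + 1/2 := by
    have : (mn.1 : ℝ) ≤ (h:ℝ) := by exact_mod_cast hm2
    linarith [h0.1, h0.2]
  have hy1a : -(1/2 : ℝ) < y 1 := by
    have : (1:ℝ) ≤ (mn.2 : ℝ) := by exact_mod_cast hw1
    linarith [h1.1, h1.2]
  have hy1b : y 1 < (w:ℝ) + 1/2 := by
    have : (mn.2 : ℝ) ≤ (w:ℝ) := by exact_mod_cast hw2
    linarith [h1.1, h1.2]
  constructor <;> rw [Finset.mem_Icc] <;> constructor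
  · rw [round_eq, Int.le_floor]
    push_cast
    linarith
  · rw [round_eq]
    have : ((⌊y 0 + 1/2⌋ : ℤ) : ℝ) < (h:ℝ) + 1 := by
      calc ((⌊y 0 + 1/2⌋ : ℤ) : ℝ) ≤ y 0 + 1/2 := Int.floor_le _
        _ < (h:ℝ) + 1 := by linarith
    have : (⌊y 0 + 1/2⌋ : ℤ) < (h:ℤ) + 1 := by exact_mod_cast this
    omega
  · rw [round_eq, Int.le_floor]
    push_cast
    linarith
  · rw [round_eq]
    have : ((⌊y 1 + 1/2⌋ : ℤ) : ℝ) < (w:ℝ) + 1 := by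
      calc ((⌊y 1 + 1/2⌋ : ℤ) : ℝ) ≤ y 1 + 1/2 := Int.floor_le _
        _ < (w:ℝ) + 1 := by linarith
    have : (⌊y 1 + 1/2⌋ : ℤ) < (w:ℤ) + 1 := by exact_mod_cast this
    omega

lemma cont_R {S : Set (ℕ × ℕ)} {h w : ℕ} {ε : ℝ}
    (hS : OnGrid S h w) (hε0 : 0 < ε) (hε : ε < 1/2) :
    ContinuousOn (R S ε) (thick ε (fg S)) := by
  classical
  have hfin : S.Finite := Set.Finite.subset
    ((Set.finite_Icc (1:ℕ) h).prod (Set.finite_Icc (1:ℕ) w)) hS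
  have hDcl : IsClosed (thick ε (fg S)) := isClosed_thick hfin hε0.le
  set J : Finset ((ℤ × ℤ) × Bool × Bool) :=
    (Finset.Icc (0:ℤ) h ×ˢ Finset.Icc (0:ℤ) w) ×ˢ (Finset.univ ×ˢ Finset.univ) with hJ
  set fam : {i // i ∈ J} → Set Plane :=
    fun i => thick ε (fg S) ∩ QC i.1.1.1 i.1.1.2 i.1.2.1 i.1.2.2 with hfam
  have hLF : LocallyFinite fam := locallyFinite_of_finite _
  have hcl : ∀ i, IsClosed (fam i) := fun i => hDcl.inter (isClosed_QC _ _ _ _)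
  have hcov : ⋃ i, fam i = thick ε (fg S) := by
    apply Subset.antisymm (iUnion_subset fun i => inter_subset_left)
    intro y hy
    obtain ⟨hb1, hb2⟩ := round_bounds hS hε hy
    have hJmem : ((round (y 0), round (y 1)),
        (bsel (round (y 0)) (y 0), bsel (round (y 1)) (y 1))) ∈ J := by
      rw [hJ]
      simp only [Finset.mem_product, Finset.mem_univ, and_true]
      exact ⟨hb1, hb2⟩
    exact mem_iUnion.2 ⟨⟨_, hJmem⟩, hy, mem_QC_round y⟩
  have hco : ∀ i, ContinuousOn (R S ε) (fam i) := by
    intro i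
    refine ContinuousOn.congr (cont_pf S ε i.1.1.1 i.1.1.2 i.1.2.1 i.1.2.2).continuousOn ?_
    intro y hy
    exact R_eq_pf hε0 hε hy.1 hy.2
  rw [← hcov]
  exact hLF.continuousOn_iUnion hcl hco

end SDRAux

open SDRAux

/-- For every binary image `S` and `0 < ε < 1/2`, the thickened foreground
`D_ε(F(S))` strongly deformation retracts onto the foreground `F(S)`. -/
theorem thickening_deformation_retracts_onto_foreground
    (h w : ℕ) (S : Set (ℕ × ℕ)) (hS : OnGrid S h w)
    (ε : ℝ) (hε0 : 0 < ε) (hε : ε < 1 / 2) :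
    SDR (thick ε (fg S)) (fg S) := by
  classical
  set X := thick ε (fg S) with hX
  have hsub : fg S ⊆ X := fun y hy => ⟨y, hy, by simp [hε0.le]⟩
  have hfix : ∀ y ∈ fg S, R S ε y = y := by
    intro y hy
    rw [R]
    exact pf_id (mem_QC_round y) hy
  have hmem : ∀ y ∈ X, R S ε y ∈ fg S := by
    intro y hy
    have := (pf_main hε0 hε (mem_QC_round y) hy).1
    rwa [R]
  have hRnorm : ∀ y ∈ X, ‖R S ε y - y‖ ≤ ε := by
    intro y hy
    have hm := pf_main hε0 hε (mem_QC_round y) hy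
    rw [pi_norm_le_iff_of_nonneg hε0.le, Fin.forall_fin_two]
    constructor <;> simp only [Pi.sub_apply, Real.norm_eq_abs] <;> rw [R]
    · exact hm.2.1
    · exact hm.2.2
  have key : ∀ (a b : Plane) (t : ℝ), a - (b + t • (a - b)) = (1 - t) • (a - b) := by
    intro a b t
    rw [sub_smul, one_smul]
    abel
  have hmem' : ∀ (z : ↥X × unitInterval),
      (z.1 : Plane) + (z.2 : ℝ) • (R S ε z.1 - z.1) ∈ X := by
    rintro ⟨⟨y, hy⟩, ⟨t, ht0, ht1⟩⟩
    refine ⟨R S ε y, hmem y hy, ?_⟩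
    simp only
    rw [key, norm_smul, Real.norm_eq_abs, abs_of_nonneg (by linarith)]
    calc (1 - t) * ‖R S ε y - y‖ ≤ 1 * ε :=
        mul_le_mul (by linarith) (hRnorm y hy) (norm_nonneg _) (by norm_num)
      _ = ε := one_mul ε
  have hcont : Continuous fun z : ↥X × unitInterval =>
      (z.1 : Plane) + (z.2 : ℝ) • (R S ε z.1 - z.1) := by
    have c1 : Continuous fun z : ↥X × unitInterval => (z.1 : Plane) :=
      continuous_subtype_val.comp continuous_fst
    have cR : Continuous fun z : ↥X × unitInterval => R S ε (z.1 : Plane) := by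
      have := cont_R hS hε0 hε
      exact this.comp_continuous c1 fun z => z.1.2
    have ct : Continuous fun z : ↥X × unitInterval => (z.2 : ℝ) :=
      continuous_subtype_val.comp continuous_snd
    exact c1.add (ct.smul (cR.sub c1))
  refine ⟨⟨fun z => ⟨(z.1 : Plane) + (z.2 : ℝ) • (R S ε z.1 - z.1), hmem' z⟩,
    hcont.subtype_mk _⟩, ?_, ?_, ?_⟩
  · intro x
    apply Subtype.ext
    show (x.1 : Plane) + ((0 : unitInterval) : ℝ) • (R S ε x.1 - x.1) = x.1
    simp
  · intro x
    show (x.1 : Plane) + ((1 : unitInterval) : ℝ) • (R S ε x.1 - x.1) ∈ fg S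
    have : (x.1 : Plane) + ((1 : unitInterval) : ℝ) • (R S ε x.1 - x.1) = R S ε x.1 := by
      rw [Set.Icc.coe_one, one_smul]
      abel
    rw [this]
    exact hmem _ x.2
  · intro a ha t
    apply Subtype.ext
    show (a.1 : Plane) + (t : ℝ) • (R S ε a.1 - a.1) = a.1
    rw [hfix _ ha, sub_self, smul_zero, add_zero]

end
end

section
/- For every binary image S on an h×w grid, the component graph of S — the simple graph whose vertex set is the disjoint union of the connected components of the foreground F(S) and the connected components of the background ℝ² \ F(S), in which a foreground component F_i is adjacent to a background component B_j if and only if F_i ∩ closure(B_j) ≠ ∅, and in which no two foreground components are adjacent and no two background components are adjacent — is a tree, i.e. it is connected and acyclic. -/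
open Set Metric

noncomputable section

/-- The component graph of a binary image `S`: vertices are the connected components of the
foreground `F(S)` and of the background `ℝ² \ F(S)`; a foreground component `F_i` is adjacent
to a background component `B_j` iff `F_i ∩ closure B_j ≠ ∅`; no two foreground components and
no two background components are adjacent. -/
def componentGraph (S : Set (ℕ × ℕ)) :
    SimpleGraph ({C : Set Plane // IsCompOf C (fg S)} ⊕
                 {C : Set Plane // IsCompOf C ((fg S)ᶜ)}) where
  Adj v w :=
    match v, w with
    | Sum.inl F, Sum.inr B => (F.1 ∩ closure B.1).Nonempty
    | Sum.inr B, Sum.inl F => (F.1 ∩ closure B.1).Nonempty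
    | _, _ => False
  symm := by
    constructor
    rintro (F | B) (F' | B') hadj
    · exact hadj.elim
    · exact hadj
    · exact hadj
    · exact hadj.elim
  loopless := by
    constructor
    rintro (F | B) hadj
    · exact hadj
    · exact hadj

/-!
Every vertex other than the unbounded background component has a lexicographically least cell
`m`, and the component containing the cell above `m` is a neighbour of smaller rank; hence the
graph is connected. It is the only such neighbour. For touching components `F` and `B`, count mod
`2` the `F`/`B` crossings in the column above a cell. Around every `2 × 2` block of cells the
crossings are even in number (the foreground cells of the block lie in one foreground component,
4-adjacent background cells in one background component), so this parity changes exactly across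
the `F`/`B` boundary; it is constant on the cells of `F` and on those of `B`, and it vanishes
before the least cell of either. So if a neighbour of a vertex `v` reaches below the least cell
`m` of `v`, the parity is `0` on that neighbour and `1` on `v`; being `0` at the cell above `m`
too, that cell lies in the neighbour. A vertex of maximal rank on a cycle would have two
neighbours of smaller rank, so the graph is acyclic.
-/

lemma IsCompOf.subset {C A : Set Plane} (h : IsCompOf C A) : C ⊆ A := by
  obtain ⟨x, -, rfl⟩ := h
  exact connectedComponentIn_subset A x

lemma IsCompOf.isPreconnected {C A : Set Plane} (h : IsCompOf C A) : IsPreconnected C := by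
  obtain ⟨x, -, rfl⟩ := h
  exact isPreconnected_connectedComponentIn

lemma IsCompOf.subset_of_isPreconnected {C A s : Set Plane} (h : IsCompOf C A)
    (hs : IsPreconnected s) (hsA : s ⊆ A) {x : Plane} (hxs : x ∈ s) (hxC : x ∈ C) : s ⊆ C := by
  obtain ⟨y, -, rfl⟩ := h
  rw [connectedComponentIn_eq hxC]
  exact hs.subset_connectedComponentIn hxs hsA

lemma IsCompOf.eq_of_mem {C D A : Set Plane} (hC : IsCompOf C A) (hD : IsCompOf D A)
    {x : Plane} (hxC : x ∈ C) (hxD : x ∈ D) : C = D := by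
  obtain ⟨y, -, rfl⟩ := hC
  obtain ⟨z, -, rfl⟩ := hD
  rw [connectedComponentIn_eq hxC, connectedComponentIn_eq hxD]

lemma isCompOf_connectedComponentIn {A : Set Plane} {x : Plane} (hx : x ∈ A) :
    IsCompOf (connectedComponentIn A x) A :=
  ⟨x, hx, rfl⟩

namespace SimpleGraph

variable {V α : Type*} [LinearOrder α] {G : SimpleGraph V}

theorem connected_of_exists_adj_lt [Finite V] (r : V → α) (root : V)
    (h : ∀ v, v ≠ root → ∃ p, G.Adj v p ∧ r p < r v) : G.Connected := by
  refine (connected_iff_exists_forall_reachable G).2 ⟨root, fun v => by_contra fun hv => ?_⟩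
  obtain ⟨u, hu, hmin⟩ :=
    exists_min_image {u | ¬G.Reachable root u} r (toFinite _) ⟨v, hv⟩
  obtain ⟨p, hup, hpu⟩ := h u fun hu' => hu (hu' ▸ Reachable.refl _)
  have hp : G.Reachable root p := by_contra fun hp => (hmin p hp).not_gt hpu
  exact hu (hp.trans hup.symm.reachable)

theorem isAcyclic_of_eq_of_adj_lt (r : V → α) (hr : Function.Injective r)
    (h : ∀ v p q, G.Adj v p → G.Adj v q → r p < r v → r q < r v → p = q) : G.IsAcyclic := by
  classical
  intro v c hc
  obtain ⟨m, hm, hmax⟩ := c.support.toFinset.exists_max_image r ⟨v, by simp⟩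
  rw [List.mem_toFinset] at hm
  have hc' := hc.rotate hm
  have hlt : ∀ x ∈ (c.rotate m hm).support, x ≠ m → r x < r m := fun x hx hxm =>
    (hmax x (by simpa using hx)).lt_of_ne (hr.ne hxm)
  have hsnd := (c.rotate m hm).adj_snd hc'.not_nil
  have hpen := (c.rotate m hm).adj_penultimate hc'.not_nil
  exact hc'.snd_ne_penultimate (h m _ _ hsnd hpen.symm
    (hlt _ (Walk.getVert_mem_support _ _) hsnd.ne.symm)
    (hlt _ (Walk.getVert_mem_support _ _) hpen.ne))

end SimpleGraph

namespace BinaryImage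

open Topology

abbrev Cell := ℤ × ℤ

def square (z : Cell) : Set Plane :=
  {x | x 0 ∈ Icc ((z.1 : ℝ) - 1) z.1 ∧ x 1 ∈ Icc ((z.2 : ℝ) - 1) z.2}

def openSquare (z : Cell) : Set Plane :=
  {x | x 0 ∈ Ioo ((z.1 : ℝ) - 1) z.1 ∧ x 1 ∈ Ioo ((z.2 : ℝ) - 1) z.2}

def center (z : Cell) : Plane := ![(z.1 : ℝ) - 1 / 2, (z.2 : ℝ) - 1 / 2]

/-- The midpoint of the centers of two cells. -/
def meetPoint (z w : Cell) : Plane :=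
  ![((z.1 + w.1 - 1 : ℤ) : ℝ) / 2, ((z.2 + w.2 - 1 : ℤ) : ℝ) / 2]

def cells (S : Set (ℕ × ℕ)) : Set Cell := Prod.map (Nat.cast : ℕ → ℤ) Nat.cast '' S

def Adj4 (z w : Cell) : Prop :=
  z.1 = w.1 ∧ (z.2 = w.2 + 1 ∨ w.2 = z.2 + 1) ∨ z.2 = w.2 ∧ (z.1 = w.1 + 1 ∨ w.1 = z.1 + 1)

def above (z : Cell) : Cell := (z.1 - 1, z.2)

section Cells

variable {z w : Cell} {x : Plane}

lemma eq_of_mem_Ioo_of_mem_Icc {m n : ℤ} {t : ℝ} (h : t ∈ Ioo ((m : ℝ) - 1) m)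
    (h' : t ∈ Icc ((n : ℝ) - 1) n) : n = m := by
  have h₁ : (n : ℝ) < m + 1 := by linarith [h.2, h'.1]
  have h₂ : (m : ℝ) < n + 1 := by linarith [h.1, h'.2]
  have : n < m + 1 := by exact_mod_cast h₁
  have : m < n + 1 := by exact_mod_cast h₂
  omega

lemma half_add_mem_Icc {a b : ℤ} (h : |a - b| ≤ 1) :
    ((a + b - 1 : ℤ) : ℝ) / 2 ∈ Icc ((a : ℝ) - 1) a := by
  have : ((a - b : ℤ) : ℝ) ∈ Icc (-1 : ℝ) 1 := by
    rw [abs_le] at h; exact ⟨by exact_mod_cast h.1, by exact_mod_cast h.2⟩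
  push_cast at this ⊢
  constructor <;> linarith [this.1, this.2]

lemma eq_or_eq_of_half_add_mem_Icc {a b n : ℤ} (h : |a - b| ≤ 1)
    (h' : ((a + b - 1 : ℤ) : ℝ) / 2 ∈ Icc ((n : ℝ) - 1) n) : n = a ∨ n = b := by
  have h₁ : ((2 * n - 1 : ℤ) : ℝ) ≤ (a + b : ℤ) := by push_cast at h' ⊢; linarith [h'.1]
  have h₂ : ((a + b : ℤ) : ℝ) ≤ (2 * n + 1 : ℤ) := by push_cast at h' ⊢; linarith [h'.2]
  have := Int.cast_le.1 h₁
  have := Int.cast_le.1 h₂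
  rw [abs_le] at h
  omega

lemma isClosed_square (z : Cell) : IsClosed (square z) :=
  (isClosed_Icc.preimage (continuous_apply 0)).inter (isClosed_Icc.preimage (continuous_apply 1))

lemma convex_square (z : Cell) : Convex ℝ (square z) :=
  ((convex_Icc _ _).linear_preimage (LinearMap.proj 0)).inter
    ((convex_Icc _ _).linear_preimage (LinearMap.proj 1))

lemma convex_openSquare (z : Cell) : Convex ℝ (openSquare z) :=
  ((convex_Ioo _ _).linear_preimage (LinearMap.proj 0)).inter
    ((convex_Ioo _ _).linear_preimage (LinearMap.proj 1))

lemma openSquare_subset_square (z : Cell) : openSquare z ⊆ square z :=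
  fun _ hx => ⟨Ioo_subset_Icc_self hx.1, Ioo_subset_Icc_self hx.2⟩

lemma center_mem_openSquare (z : Cell) : center z ∈ openSquare z := by
  simp only [openSquare, center, mem_ofPred_eq, mem_Ioo, Matrix.cons_val_zero,
    Matrix.cons_val_one]
  norm_num

lemma eq_of_mem_openSquare_of_mem_square (hz : x ∈ openSquare z) (hw : x ∈ square w) :
    w = z :=
  Prod.ext (eq_of_mem_Ioo_of_mem_Icc hz.1 hw.1) (eq_of_mem_Ioo_of_mem_Icc hz.2 hw.2)

lemma combo_center_mem_openSquare (hx : x ∈ square z) {t : ℝ} (ht : t ∈ Ioc 0 1) :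
    (1 - t) • x + t • center z ∈ openSquare z := by
  obtain ⟨⟨h₁, h₂⟩, h₃, h₄⟩ := hx
  obtain ⟨ht₀, ht₁⟩ := ht
  simp only [openSquare, center, mem_ofPred_eq, mem_Ioo, Pi.add_apply, Pi.smul_apply,
    smul_eq_mul, Matrix.cons_val_zero, Matrix.cons_val_one]
  refine ⟨⟨?_, ?_⟩, ?_, ?_⟩ <;> nlinarith

lemma square_subset_closure_openSquare (z : Cell) : square z ⊆ closure (openSquare z) := by
  intro x hx
  have hlim : Filter.Tendsto (fun t : ℝ => (1 - t) • x + t • center z) (𝓝[>] 0) (𝓝 x) := by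
    have : Continuous fun t : ℝ => (1 - t) • x + t • center z := by fun_prop
    simpa using (this.tendsto 0).mono_left nhdsWithin_le_nhds
  refine mem_closure_of_tendsto hlim ?_
  filter_upwards [Ioo_mem_nhdsGT one_pos] with t ht
  exact combo_center_mem_openSquare hx (Ioo_subset_Ioc_self ht)

lemma exists_mem_square (x : Plane) : ∃ z : Cell, x ∈ square z := by
  refine ⟨(⌈x 0⌉, ⌈x 1⌉), ⟨?_, Int.le_ceil _⟩, ?_, Int.le_ceil _⟩
  · linarith [Int.ceil_lt_add_one (x 0)]
  · linarith [Int.ceil_lt_add_one (x 1)]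

lemma meetPoint_comm (z w : Cell) : meetPoint z w = meetPoint w z := by
  simp only [meetPoint, add_comm z.1, add_comm z.2]

lemma meetPoint_mem_square (h₁ : |z.1 - w.1| ≤ 1) (h₂ : |z.2 - w.2| ≤ 1) :
    meetPoint z w ∈ square z :=
  ⟨half_add_mem_Icc h₁, half_add_mem_Icc h₂⟩

lemma square_inter_nonempty_iff :
    (square z ∩ square w).Nonempty ↔ |z.1 - w.1| ≤ 1 ∧ |z.2 - w.2| ≤ 1 := by
  constructor
  · rintro ⟨x, ⟨⟨a₁, a₂⟩, a₃, a₄⟩, ⟨b₁, b₂⟩, b₃, b₄⟩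
    have : z.1 ≤ w.1 + 1 := by exact_mod_cast (by linarith : (z.1 : ℝ) ≤ w.1 + 1)
    have : w.1 ≤ z.1 + 1 := by exact_mod_cast (by linarith : (w.1 : ℝ) ≤ z.1 + 1)
    have : z.2 ≤ w.2 + 1 := by exact_mod_cast (by linarith : (z.2 : ℝ) ≤ w.2 + 1)
    have : w.2 ≤ z.2 + 1 := by exact_mod_cast (by linarith : (w.2 : ℝ) ≤ z.2 + 1)
    constructor <;> rw [abs_le] <;> constructor <;> omega
  · rintro ⟨h₁, h₂⟩
    refine ⟨meetPoint z w, meetPoint_mem_square h₁ h₂, meetPoint_comm z w ▸ ?_⟩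
    exact meetPoint_mem_square (abs_sub_comm z.1 w.1 ▸ h₁) (abs_sub_comm z.2 w.2 ▸ h₂)

lemma Adj4.symm (h : Adj4 z w) : Adj4 w z := by unfold Adj4 at *; omega

lemma Adj4.abs_sub_le (h : Adj4 z w) : |z.1 - w.1| ≤ 1 ∧ |z.2 - w.2| ≤ 1 := by
  unfold Adj4 at h; constructor <;> rw [abs_le] <;> omega

lemma adj4_of_fst_eq (h₁ : z.1 = w.1) (h₂ : |z.2 - w.2| ≤ 1) (hne : z ≠ w) : Adj4 z w := by
  have : z.2 ≠ w.2 := fun h => hne (Prod.ext h₁ h)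
  rw [abs_le] at h₂; unfold Adj4; omega

lemma adj4_of_snd_eq (h₂ : z.2 = w.2) (h₁ : |z.1 - w.1| ≤ 1) (hne : z ≠ w) : Adj4 z w := by
  have : z.1 ≠ w.1 := fun h => hne (Prod.ext h h₂)
  rw [abs_le] at h₁; unfold Adj4; omega

lemma Adj4.eq_or_eq_of_mem_square (h : Adj4 z w) {u : Cell} (hu : meetPoint z w ∈ square u) :
    u = z ∨ u = w := by
  obtain ⟨h₁, h₂⟩ := h.abs_sub_le
  rcases eq_or_eq_of_half_add_mem_Icc h₁ hu.1 with e₁ | e₁ <;>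
    rcases eq_or_eq_of_half_add_mem_Icc h₂ hu.2 with e₂ | e₂ <;>
    rcases h with ⟨h', -⟩ | ⟨h', -⟩ <;>
    first
    | exact Or.inl (Prod.ext (by omega) (by omega))
    | exact Or.inr (Prod.ext (by omega) (by omega))

lemma adj4_above (z : Cell) : Adj4 (above z) z := by
  unfold Adj4 above; omega

lemma toLex_above_lt (z : Cell) : toLex (above z) < toLex z :=
  Prod.Lex.toLex_lt_toLex.2 (Or.inl (by simp [above]))

lemma locallyFinite_square : LocallyFinite square := by
  intro x
  refine ⟨ball x 1, ball_mem_nhds x one_pos, ?_⟩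
  have coord : ∀ (i : Fin 2) (y : Plane) (n : ℤ), y ∈ ball x 1 → y i ∈ Icc ((n : ℝ) - 1) n →
      n ∈ Icc ⌊x i⌋ (⌊x i⌋ + 2) := by
    intro i y n hy hn
    have hyx : |y i - x i| < 1 := by
      rw [← Real.dist_eq]; exact (dist_le_pi_dist y x i).trans_lt (mem_ball.1 hy)
    rw [abs_lt] at hyx
    have h₁ : (⌊x i⌋ : ℝ) - 1 < n := by linarith [Int.floor_le (x i), hn.2]
    have h₂ : (n : ℝ) < ⌊x i⌋ + 3 := by linarith [Int.lt_floor_add_one (x i), hn.1]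
    have : ⌊x i⌋ - 1 < n := by exact_mod_cast h₁
    have : n < ⌊x i⌋ + 3 := by exact_mod_cast h₂
    constructor <;> omega
  refine ((finite_Icc ⌊x 0⌋ (⌊x 0⌋ + 2)).prod (finite_Icc ⌊x 1⌋ (⌊x 1⌋ + 2))).subset ?_
  rintro z ⟨y, hyz, hy⟩
  exact ⟨coord 0 y z.1 hy hyz.1, coord 1 y z.2 hy hyz.2⟩

lemma isClosed_biUnion_square (T : Set Cell) : IsClosed (⋃ z ∈ T, square z) := by
  rw [biUnion_eq_iUnion]
  exact (locallyFinite_square.comp_injective Subtype.val_injective).isClosed_iUnion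
    fun z => isClosed_square z

lemma fg_eq_biUnion_square (S : Set (ℕ × ℕ)) : fg S = ⋃ z ∈ cells S, square z := by
  ext x
  simp only [fg, cells, pixel, square, mem_iUnion, mem_image, exists_prop, Prod.exists,
    Prod.map_apply, Prod.mk.injEq, mem_ofPred_eq]
  constructor
  · rintro ⟨a, b, hab, hx⟩
    exact ⟨a, b, ⟨a, b, hab, rfl, rfl⟩, by exact_mod_cast hx⟩
  · rintro ⟨_, _, ⟨a, b, hab, rfl, rfl⟩, hx⟩
    exact ⟨a, b, hab, by exact_mod_cast hx⟩

end Cells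

section Components

variable {S : Set (ℕ × ℕ)} {F B : Set Plane} {z w : Cell} {x : Plane}

def fgCells (S : Set (ℕ × ℕ)) (F : Set Plane) : Set Cell := {z | z ∈ cells S ∧ center z ∈ F}

def bgCells (S : Set (ℕ × ℕ)) (B : Set Plane) : Set Cell := {z | z ∉ cells S ∧ center z ∈ B}

lemma disjoint_fgCells_bgCells : Disjoint (fgCells S F) (bgCells S B) :=
  Set.disjoint_left.2 fun _ hf hb => hb.1 hf.1

lemma square_subset_fg (hz : z ∈ cells S) : square z ⊆ fg S := by
  rw [fg_eq_biUnion_square]; exact subset_biUnion_of_mem hz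

lemma openSquare_subset_compl_fg (hz : z ∉ cells S) : openSquare z ⊆ (fg S)ᶜ := by
  intro x hx hfg
  rw [fg_eq_biUnion_square, mem_iUnion₂] at hfg
  obtain ⟨w, hw, hxw⟩ := hfg
  exact hz (eq_of_mem_openSquare_of_mem_square hx hxw ▸ hw)

lemma segment_center_subset_compl_fg (hz : z ∉ cells S) (hx : x ∈ square z)
    (hxS : x ∉ fg S) : segment ℝ x (center z) ⊆ (fg S)ᶜ := by
  rw [segment_eq_image]
  rintro _ ⟨t, ht, rfl⟩
  rcases ht.1.eq_or_lt with rfl | ht₀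
  · simpa using hxS
  · exact openSquare_subset_compl_fg hz (combo_center_mem_openSquare hx ⟨ht₀, ht.2⟩)

lemma center_mem_fg (hz : z ∈ cells S) : center z ∈ fg S :=
  square_subset_fg hz (openSquare_subset_square z (center_mem_openSquare z))

lemma center_notMem_fg (hz : z ∉ cells S) : center z ∉ fg S :=
  openSquare_subset_compl_fg hz (center_mem_openSquare z)

lemma square_subset_of_mem_fgCells (hF : IsCompOf F (fg S)) (hz : z ∈ fgCells S F) :
    square z ⊆ F :=
  hF.subset_of_isPreconnected (convex_square z).isPreconnected (square_subset_fg hz.1)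
    (openSquare_subset_square z (center_mem_openSquare z)) hz.2

lemma mem_fgCells (hF : IsCompOf F (fg S)) (hz : z ∈ cells S) (hxz : x ∈ square z)
    (hxF : x ∈ F) : z ∈ fgCells S F :=
  ⟨hz, hF.subset_of_isPreconnected (convex_square z).isPreconnected (square_subset_fg hz) hxz
    hxF (openSquare_subset_square z (center_mem_openSquare z))⟩

lemma mem_fgCells_of_square_inter (hF : IsCompOf F (fg S)) (hz : z ∈ fgCells S F)
    (hw : w ∈ cells S) (hzw : (square z ∩ square w).Nonempty) : w ∈ fgCells S F :=
  let ⟨_, hxz, hxw⟩ := hzw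
  mem_fgCells hF hw hxw (square_subset_of_mem_fgCells hF hz hxz)

lemma mem_bgCells (hB : IsCompOf B (fg S)ᶜ) (hxz : x ∈ square z) (hxB : x ∈ B) :
    z ∈ bgCells S B := by
  have hxS : x ∉ fg S := hB.subset hxB
  have hz : z ∉ cells S := fun hz => hxS (square_subset_fg hz hxz)
  exact ⟨hz, hB.subset_of_isPreconnected (convex_segment _ _).isPreconnected
    (segment_center_subset_compl_fg hz hxz hxS) (left_mem_segment ℝ _ _) hxB
    (right_mem_segment ℝ _ _)⟩

lemma mem_of_mem_bgCells (hB : IsCompOf B (fg S)ᶜ) (hz : z ∈ bgCells S B)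
    (hxz : x ∈ square z) (hxS : x ∉ fg S) : x ∈ B :=
  hB.subset_of_isPreconnected (convex_segment _ _).isPreconnected
    (segment_center_subset_compl_fg hz.1 hxz hxS) (right_mem_segment ℝ _ _) hz.2
    (left_mem_segment ℝ _ _)

lemma openSquare_subset_of_mem_bgCells (hB : IsCompOf B (fg S)ᶜ) (hz : z ∈ bgCells S B) :
    openSquare z ⊆ B :=
  hB.subset_of_isPreconnected (convex_openSquare z).isPreconnected
    (openSquare_subset_compl_fg hz.1) (center_mem_openSquare z) hz.2

lemma mem_bgCells_of_adj4 (hB : IsCompOf B (fg S)ᶜ) (hz : z ∈ bgCells S B)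
    (hw : w ∉ cells S) (h : Adj4 z w) : w ∈ bgCells S B := by
  obtain ⟨h₁, h₂⟩ := h.abs_sub_le
  have hmz : meetPoint z w ∈ square z := meetPoint_mem_square h₁ h₂
  have hmw : meetPoint z w ∈ square w := meetPoint_comm z w ▸
    meetPoint_mem_square (abs_sub_comm z.1 w.1 ▸ h₁) (abs_sub_comm z.2 w.2 ▸ h₂)
  have hmS : meetPoint z w ∉ fg S := by
    rw [fg_eq_biUnion_square, mem_iUnion₂]
    rintro ⟨u, hu, hmu⟩
    rcases h.eq_or_eq_of_mem_square hmu with rfl | rfl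
    exacts [hz.1 hu, hw hu]
  exact mem_bgCells hB hmw (mem_of_mem_bgCells hB hz hmz hmS)

lemma subset_biUnion_fgCells (hF : IsCompOf F (fg S)) : F ⊆ ⋃ z ∈ fgCells S F, square z := by
  intro x hxF
  have hx := hF.subset hxF
  rw [fg_eq_biUnion_square, mem_iUnion₂] at hx
  obtain ⟨z, hz, hxz⟩ := hx
  exact mem_biUnion (mem_fgCells hF hz hxz hxF) hxz

lemma subset_biUnion_bgCells (hB : IsCompOf B (fg S)ᶜ) : B ⊆ ⋃ z ∈ bgCells S B, square z := by
  intro x hxB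
  obtain ⟨z, hxz⟩ := exists_mem_square x
  exact mem_biUnion (mem_bgCells hB hxz hxB) hxz

lemma closure_subset_biUnion_bgCells (hB : IsCompOf B (fg S)ᶜ) :
    closure B ⊆ ⋃ z ∈ bgCells S B, square z :=
  closure_minimal (subset_biUnion_bgCells hB) (isClosed_biUnion_square _)

end Components

theorem eq_of_isPreconnected {α : Type*} {C : Set Plane} (hC : IsPreconnected C) {T : Set Cell}
    (hCT : C ⊆ ⋃ z ∈ T, square z) (hTC : ∀ z ∈ T, (C ∩ square z).Nonempty) {f : Cell → α}
    (hf : ∀ z ∈ T, ∀ w ∈ T, (square z ∩ square w).Nonempty → f z = f w) :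
    ∀ z ∈ T, ∀ w ∈ T, f z = f w := by
  intro z hz w hw
  by_contra hzw
  obtain ⟨x, -, hx₁, hx₂⟩ := isPreconnected_closed_iff.1 hC _ _
    (isClosed_biUnion_square {u ∈ T | f u = f z}) (isClosed_biUnion_square {u ∈ T | f u ≠ f z})
    (fun x hx => by
      obtain ⟨u, hu, hxu⟩ := mem_iUnion₂.1 (hCT hx)
      by_cases huR : f u = f z
      · exact Or.inl (mem_biUnion ⟨hu, huR⟩ hxu)
      · exact Or.inr (mem_biUnion ⟨hu, huR⟩ hxu))
    (let ⟨x, hxC, hxz⟩ := hTC z hz; ⟨x, hxC, mem_biUnion ⟨hz, rfl⟩ hxz⟩)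
    (let ⟨x, hxC, hxw⟩ := hTC w hw; ⟨x, hxC, mem_biUnion ⟨hw, Ne.symm hzw⟩ hxw⟩)
  obtain ⟨u, hu, hxu⟩ := mem_iUnion₂.1 hx₁
  obtain ⟨v, hv, hxv⟩ := mem_iUnion₂.1 hx₂
  exact hv.2 ((hf v hv.1 u hu.1 ⟨x, hxv, hxu⟩).trans hu.2)

section Touching

variable {S : Set (ℕ × ℕ)} {F B : Set Plane}

theorem inter_closure_nonempty_of_adj4 (hF : IsCompOf F (fg S)) (hB : IsCompOf B (fg S)ᶜ)
    {f b : Cell} (hf : f ∈ fgCells S F) (hb : b ∈ bgCells S B) (h : Adj4 f b) :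
    (F ∩ closure B).Nonempty := by
  obtain ⟨h₁, h₂⟩ := h.abs_sub_le
  have hmb : meetPoint f b ∈ square b := meetPoint_comm f b ▸
    meetPoint_mem_square (abs_sub_comm f.1 b.1 ▸ h₁) (abs_sub_comm f.2 b.2 ▸ h₂)
  exact ⟨meetPoint f b, square_subset_of_mem_fgCells hF hf (meetPoint_mem_square h₁ h₂),
    closure_mono (openSquare_subset_of_mem_bgCells hB hb) (square_subset_closure_openSquare b hmb)⟩

theorem exists_adj4_of_inter_closure_nonempty (hF : IsCompOf F (fg S)) (hB : IsCompOf B (fg S)ᶜ)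
    (h : (F ∩ closure B).Nonempty) : ∃ f ∈ fgCells S F, ∃ b ∈ bgCells S B, Adj4 f b := by
  obtain ⟨x, hxF, hxB⟩ := h
  obtain ⟨f, hf, hxf⟩ := mem_iUnion₂.1 (subset_biUnion_fgCells hF hxF)
  obtain ⟨b, hb, hxb⟩ := mem_iUnion₂.1 (closure_subset_biUnion_bgCells hB hxB)
  obtain ⟨h₁, h₂⟩ := square_inter_nonempty_iff.1 ⟨x, hxf, hxb⟩
  -- the cell in the row of `f` and the column of `b` is 4-adjacent (or equal) to both
  have hxc : x ∈ square (f.1, b.2) := ⟨hxf.1, hxb.2⟩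
  by_cases hc : ((f.1, b.2) : Cell) ∈ cells S
  · refine ⟨_, mem_fgCells hF hc hxc hxF, b, hb, adj4_of_snd_eq rfl h₁ fun hcb => ?_⟩
    exact hb.1 (hcb ▸ hc)
  · have hcb : ((f.1, b.2) : Cell) ∈ bgCells S B := by
      rcases eq_or_ne ((f.1, b.2) : Cell) b with hcb | hcb
      · exact hcb ▸ hb
      · exact mem_bgCells_of_adj4 hB hb hc
          (adj4_of_snd_eq (z := b) rfl (abs_sub_comm f.1 b.1 ▸ h₁) (Ne.symm hcb))
    refine ⟨f, hf, _, hcb, adj4_of_fst_eq rfl h₂ fun hfc => ?_⟩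
    exact hc (hfc ▸ hf.1)

end Touching

section Parity

variable {X Y : Set Cell} {u v z : Cell}

open Classical in
def crossing (X Y : Set Cell) (u v : Cell) : ZMod 2 :=
  if u ∈ X ∧ v ∈ Y ∨ u ∈ Y ∧ v ∈ X then 1 else 0

lemma crossing_comm (X Y : Set Cell) (u v : Cell) : crossing X Y u v = crossing X Y v u := by
  unfold crossing
  split_ifs <;> first | rfl | tauto

lemma crossing_swap (X Y : Set Cell) : crossing Y X = crossing X Y := by
  ext u v
  unfold crossing
  split_ifs <;> first | rfl | tauto

lemma crossing_eq_one (hu : u ∈ X) (hv : v ∈ Y) : crossing X Y u v = 1 :=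
  if_pos (Or.inl ⟨hu, hv⟩)

lemma crossing_eq_zero (hu : u ∉ X) (hv : v ∉ X) : crossing X Y u v = 0 :=
  if_neg (by tauto)

lemma crossing_self (hXY : Disjoint X Y) (u : Cell) : crossing X Y u u = 0 :=
  if_neg fun h => h.elim (fun h => hXY.notMem_of_mem_left h.1 h.2)
    fun h => hXY.notMem_of_mem_left h.2 h.1

lemma crossing_eq_crossing (hXY : Disjoint X Y) (h : u ∈ X ∧ v ∈ X ∨ u ∈ Y ∧ v ∈ Y)
    (w : Cell) : crossing X Y u w = crossing X Y v w := by
  classical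
  have hX := hXY.notMem_of_mem_left
  have hY := hXY.notMem_of_mem_right
  refine if_congr ?_ rfl rfl
  rcases h with ⟨hu, hv⟩ | ⟨hu, hv⟩
  · simp only [hu, hv, hX hu, hX hv, true_and, false_and, or_false]
  · simp only [hu, hv, hY hu, hY hv, true_and, false_and, false_or]

lemma mem_of_crossing_eq_one (hXY : Disjoint X Y) (hv : v ∈ X) (h : crossing X Y u v = 1) :
    u ∈ Y := by
  by_contra hu
  rw [crossing, if_neg] at h
  · exact zero_ne_one h
  · rintro (⟨-, hv'⟩ | ⟨hu', -⟩)
    exacts [hXY.notMem_of_mem_left hv hv', hu hu']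

/-- Only the rows `k ≥ 0` are counted, which is harmless as `X` will lie in the rows `≥ 1`. -/
def columnParity (X Y : Set Cell) (z : Cell) : ZMod 2 :=
  ∑ k ∈ Finset.range z.1.toNat, crossing X Y (k, z.2) (k + 1, z.2)

lemma columnParity_swap (X Y : Set Cell) : columnParity Y X = columnParity X Y := by
  ext z
  simp only [columnParity, crossing_swap]

lemma columnParity_eq_zero (h : ∀ x ∈ X, toLex z < toLex x) : columnParity X Y z = 0 := by
  have hX : ∀ q : Cell, q.1 ≤ z.1 → q.2 = z.2 → q ∉ X := fun q h₁ h₂ hq => by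
    have := Prod.Lex.toLex_lt_toLex.1 (h q hq)
    omega
  refine Finset.sum_eq_zero fun k hk => crossing_eq_zero (hX _ ?_ rfl) (hX _ ?_ rfl) <;>
    simp only [Finset.mem_range] at hk <;> omega

variable (hX : ∀ x ∈ X, 0 < x.1)
include hX

lemma columnParity_add_one_fst (i j : ℤ) :
    columnParity X Y (i + 1, j) = columnParity X Y (i, j) + crossing X Y (i, j) (i + 1, j) := by
  rcases lt_or_ge i 0 with hi | hi
  · have hX' : ∀ k : ℤ, k ≤ 0 → ((k, j) : Cell) ∉ X := fun k hk hkX => by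
      have := hX _ hkX; simp only at this; omega
    rw [crossing_eq_zero (hX' i hi.le) (hX' (i + 1) (by omega))]
    simp [columnParity, Int.toNat_eq_zero.2 hi.le, Int.toNat_eq_zero.2 (by omega : i + 1 ≤ 0)]
  · obtain ⟨n, rfl⟩ := Int.eq_ofNat_of_zero_le hi
    rw [show (n : ℤ) + 1 = ((n + 1 : ℕ) : ℤ) by push_cast; rfl]
    simp only [columnParity, Int.toNat_natCast, Finset.sum_range_succ]
    push_cast
    rfl

variable (hcorner : ∀ i j : ℤ, crossing X Y (i, j) (i + 1, j) +
    crossing X Y (i, j + 1) (i + 1, j + 1) + crossing X Y (i, j) (i, j + 1) +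
    crossing X Y (i + 1, j) (i + 1, j + 1) = 0)
include hcorner

lemma columnParity_add_one_snd (i j : ℤ) :
    columnParity X Y (i, j + 1) = columnParity X Y (i, j) + crossing X Y (i, j) (i, j + 1) := by
  rcases lt_or_ge i 0 with hi | hi
  · have hX' : ∀ k : ℤ, ((i, k) : Cell) ∉ X := fun k hkX => by
      have := hX _ hkX; simp only at this; omega
    rw [crossing_eq_zero (hX' j) (hX' (j + 1))]
    simp [columnParity, Int.toNat_eq_zero.2 hi.le]
  obtain ⟨n, rfl⟩ := Int.eq_ofNat_of_zero_le hi
  induction n with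
  | zero =>
    have hX' : ∀ k : ℤ, ((0, k) : Cell) ∉ X := fun k hkX => by
      have := hX _ hkX; simp only at this; omega
    simp [columnParity, crossing_eq_zero (hX' j) (hX' (j + 1))]
  | succ n ih =>
    push_cast
    rw [columnParity_add_one_fst hX, columnParity_add_one_fst hX, ih (by positivity)]
    linear_combination (norm := ring_nf) hcorner n j
    reduce_mod_char

theorem columnParity_add_of_adj4 (h : Adj4 u v) :
    columnParity X Y u + columnParity X Y v = crossing X Y u v := by
  have hfst : ∀ i j : ℤ, columnParity X Y (i, j) + columnParity X Y (i + 1, j) =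
      crossing X Y (i, j) (i + 1, j) := fun i j => by
    rw [columnParity_add_one_fst hX, ← add_assoc, CharTwo.add_self_eq_zero, zero_add]
  have hsnd : ∀ i j : ℤ, columnParity X Y (i, j) + columnParity X Y (i, j + 1) =
      crossing X Y (i, j) (i, j + 1) := fun i j => by
    rw [columnParity_add_one_snd hX hcorner, ← add_assoc, CharTwo.add_self_eq_zero, zero_add]
  obtain ⟨a, b⟩ := u
  obtain ⟨c, d⟩ := v
  simp only [Adj4] at h
  rcases h with ⟨rfl, rfl | rfl⟩ | ⟨rfl, rfl | rfl⟩
  · rw [add_comm, crossing_comm]; exact hsnd _ _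
  · exact hsnd _ _
  · rw [add_comm, crossing_comm]; exact hfst _ _
  · exact hfst _ _

theorem columnParity_eq_of_near (hXY : Disjoint X Y) (huv : u ∈ X ∧ v ∈ X ∨ u ∈ Y ∧ v ∈ Y)
    (h₁ : |u.1 - v.1| ≤ 1) (h₂ : |u.2 - v.2| ≤ 1) : columnParity X Y u = columnParity X Y v := by
  have step : ∀ a b : Cell, a = b ∨ Adj4 a b →
      columnParity X Y a + columnParity X Y b = crossing X Y a b := by
    rintro a b (rfl | hab)
    · rw [CharTwo.add_self_eq_zero, crossing_self hXY]
    · exact columnParity_add_of_adj4 hX hcorner hab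
  have h₁' : ((u.1, v.2) : Cell) = v ∨ Adj4 (u.1, v.2) v := by
    by_cases he : ((u.1, v.2) : Cell) = v
    exacts [Or.inl he, Or.inr (adj4_of_snd_eq rfl h₁ he)]
  have h₂' : u = (u.1, v.2) ∨ Adj4 u (u.1, v.2) := by
    by_cases he : u = (u.1, v.2)
    exacts [Or.inl he, Or.inr (adj4_of_fst_eq rfl h₂ he)]
  have := (step _ _ h₂').trans ((crossing_eq_crossing hXY huv _).trans
    ((crossing_comm _ _ _ _).trans (step _ _ h₁').symm))
  rw [add_comm] at this
  exact add_left_cancel this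

end Parity

theorem above_mem_of_isLeast {X Y : Set Cell} (hXY : Disjoint X Y) {P : Cell → ZMod 2}
    (hP : ∀ u v, Adj4 u v → P u + P v = crossing X Y u v)
    (hPX : ∀ u ∈ X, ∀ v ∈ X, P u = P v) (hPY : ∀ u ∈ Y, ∀ v ∈ Y, P u = P v)
    (hP₀ : ∀ z, (∀ x ∈ X, toLex z < toLex x) → P z = 0)
    (hXY' : ∃ x ∈ X, ∃ y ∈ Y, Adj4 x y) {m y : Cell} (hm : m ∈ X)
    (hmin : ∀ x ∈ X, toLex m ≤ toLex x) (hy : y ∈ Y) (hym : toLex y < toLex m) :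
    above m ∈ Y := by
  obtain ⟨x₀, hx₀, y₀, hy₀, hxy₀⟩ := hXY'
  have hbelow : ∀ z, toLex z < toLex m → P z = 0 :=
    fun z hz => hP₀ z fun x hx => hz.trans_le (hmin x hx)
  have hPm : P m = 1 := by
    have := hP x₀ y₀ hxy₀
    rwa [crossing_eq_one hx₀ hy₀, hPX x₀ hx₀ m hm, hPY y₀ hy₀ y hy, hbelow y hym,
      add_zero] at this
  have := hP _ _ (adj4_above m)
  rw [hbelow _ (toLex_above_lt m), hPm, zero_add] at this
  exact mem_of_crossing_eq_one hXY hm this.symm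

section Corner

variable {S : Set (ℕ × ℕ)} {F B : Set Plane} {u v : Cell}

open Classical in
lemma crossing_fgCells_bgCells (u v : Cell) :
    crossing (fgCells S F) (bgCells S B) u v =
      if ¬(u ∈ cells S ↔ v ∈ cells S) ∧ u ∈ fgCells S F ∪ bgCells S B ∧
        v ∈ fgCells S F ∪ bgCells S B then 1 else 0 := by
  unfold crossing
  refine if_congr ?_ rfl rfl
  simp only [fgCells, bgCells, mem_union, mem_ofPred_eq]
  tauto

lemma mem_fgCells_union_iff_of_mem_cells (hF : IsCompOf F (fg S)) (hu : u ∈ cells S)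
    (hv : v ∈ cells S) (huv : (square u ∩ square v).Nonempty) :
    u ∈ fgCells S F ∪ bgCells S B ↔ v ∈ fgCells S F ∪ bgCells S B := by
  rw [mem_union, mem_union, or_iff_left fun h => h.1 hu, or_iff_left fun h => h.1 hv]
  exact ⟨fun h' => mem_fgCells_of_square_inter hF h' hv huv,
    fun h' => mem_fgCells_of_square_inter hF h' hu (inter_comm _ _ ▸ huv)⟩

lemma mem_fgCells_union_iff_of_adj4 (hF : IsCompOf F (fg S)) (hB : IsCompOf B (fg S)ᶜ)
    (h : Adj4 u v) (hs : u ∈ cells S ↔ v ∈ cells S) :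
    u ∈ fgCells S F ∪ bgCells S B ↔ v ∈ fgCells S F ∪ bgCells S B := by
  by_cases hu : u ∈ cells S
  · exact mem_fgCells_union_iff_of_mem_cells hF hu (hs.1 hu)
      (square_inter_nonempty_iff.2 h.abs_sub_le)
  · have hv := mt hs.2 hu
    rw [mem_union, mem_union, or_iff_right fun h => hu h.1, or_iff_right fun h => hv h.1]
    exact ⟨fun h' => mem_bgCells_of_adj4 hB h' hv h, fun h' => mem_bgCells_of_adj4 hB h' hu h.symm⟩

/-- The crossings around a `2 × 2` block of cells, each recorded by whether it is a foreground
cell (`sᵢ`) and whether it lies in `F ∪ B` (`mᵢ`), cells `1, 2` forming the top row and `1, 3`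
the left column. -/
lemma block_crossings_even : ∀ s₁ s₂ s₃ s₄ m₁ m₂ m₃ m₄ : Bool,
    (s₁ = s₂ → m₁ = m₂) → (s₃ = s₄ → m₃ = m₄) → (s₁ = s₃ → m₁ = m₃) → (s₂ = s₄ → m₂ = m₄) →
    (s₁ → s₄ → m₁ = m₄) → (s₂ → s₃ → m₂ = m₃) →
    ((if s₁ ≠ s₃ ∧ m₁ ∧ m₃ then 1 else 0) + (if s₂ ≠ s₄ ∧ m₂ ∧ m₄ then 1 else 0) +
      (if s₁ ≠ s₂ ∧ m₁ ∧ m₂ then 1 else 0) + (if s₃ ≠ s₄ ∧ m₃ ∧ m₄ then 1 else 0) : ZMod 2) =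
      0 := by
  decide

/-- Foreground cells of a `2 × 2` block are 8-adjacent, so they all lie in `F` or all outside it;
background cells of the block that are 4-adjacent all lie in `B` or all outside it. -/
theorem crossing_fgCells_bgCells_block (hF : IsCompOf F (fg S)) (hB : IsCompOf B (fg S)ᶜ)
    (i j : ℤ) :
    crossing (fgCells S F) (bgCells S B) (i, j) (i + 1, j) +
      crossing (fgCells S F) (bgCells S B) (i, j + 1) (i + 1, j + 1) +
      crossing (fgCells S F) (bgCells S B) (i, j) (i, j + 1) +
      crossing (fgCells S F) (bgCells S B) (i + 1, j) (i + 1, j + 1) = 0 := by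
  classical
  have adj : ∀ {u v : Cell}, Adj4 u v → (decide (u ∈ cells S) = decide (v ∈ cells S) →
      decide (u ∈ fgCells S F ∪ bgCells S B) = decide (v ∈ fgCells S F ∪ bgCells S B)) :=
    fun h hs => decide_eq_decide.2 (mem_fgCells_union_iff_of_adj4 hF hB h (decide_eq_decide.1 hs))
  have diag : ∀ {u v : Cell}, |u.1 - v.1| ≤ 1 → |u.2 - v.2| ≤ 1 → (decide (u ∈ cells S) →
      decide (v ∈ cells S) → decide (u ∈ fgCells S F ∪ bgCells S B) =
        decide (v ∈ fgCells S F ∪ bgCells S B)) := fun h₁ h₂ hu hv =>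
    decide_eq_decide.2 (mem_fgCells_union_iff_of_mem_cells hF (of_decide_eq_true hu)
      (of_decide_eq_true hv) (square_inter_nonempty_iff.2 ⟨h₁, h₂⟩))
  have := block_crossings_even _ _ _ _ _ _ _ _
    (adj (u := (i, j)) (v := (i, j + 1)) (Or.inl ⟨rfl, Or.inr rfl⟩))
    (adj (u := (i + 1, j)) (v := (i + 1, j + 1)) (Or.inl ⟨rfl, Or.inr rfl⟩))
    (adj (u := (i, j)) (v := (i + 1, j)) (Or.inr ⟨rfl, Or.inr rfl⟩))
    (adj (u := (i, j + 1)) (v := (i + 1, j + 1)) (Or.inr ⟨rfl, Or.inr rfl⟩))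
    (diag (u := (i, j)) (v := (i + 1, j + 1)) (by simp) (by simp))
    (diag (u := (i, j + 1)) (v := (i + 1, j)) (by simp) (by simp))
  simpa only [crossing_fgCells_bgCells, ne_eq, decide_eq_decide, decide_eq_true_eq] using this

end Corner

section Separation

variable {S : Set (ℕ × ℕ)} {F B : Set Plane}

lemma fst_pos_of_mem_cells (hrow : ∀ p ∈ S, 0 < p.1) {z : Cell} (hz : z ∈ cells S) : 0 < z.1 := by
  obtain ⟨p, hp, rfl⟩ := hz
  simpa using hrow p hp

variable (hrow : ∀ p ∈ S, 0 < p.1) (hF : IsCompOf F (fg S)) (hB : IsCompOf B (fg S)ᶜ)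
include hrow hF hB

theorem columnParity_fgCells_bgCells_add_of_adj4 {u v : Cell} (h : Adj4 u v) :
    columnParity (fgCells S F) (bgCells S B) u + columnParity (fgCells S F) (bgCells S B) v =
      crossing (fgCells S F) (bgCells S B) u v :=
  columnParity_add_of_adj4 (fun _ hx => fst_pos_of_mem_cells hrow hx.1)
    (crossing_fgCells_bgCells_block hF hB) h

theorem columnParity_fgCells_bgCells_eq (T : Set Cell) (hT : T = fgCells S F ∨ T = bgCells S B) :
    ∀ u ∈ T, ∀ v ∈ T, columnParity (fgCells S F) (bgCells S B) u =
      columnParity (fgCells S F) (bgCells S B) v := by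
  have hnear : ∀ u ∈ T, ∀ v ∈ T, (square u ∩ square v).Nonempty →
      columnParity (fgCells S F) (bgCells S B) u = columnParity (fgCells S F) (bgCells S B) v :=
    fun u hu v hv huv => columnParity_eq_of_near (fun _ hx => fst_pos_of_mem_cells hrow hx.1)
      (crossing_fgCells_bgCells_block hF hB) disjoint_fgCells_bgCells
      (by rcases hT with rfl | rfl; exacts [Or.inl ⟨hu, hv⟩, Or.inr ⟨hu, hv⟩])
      (square_inter_nonempty_iff.1 huv).1 (square_inter_nonempty_iff.1 huv).2
  have hcenter : ∀ z, center z ∈ square z :=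
    fun z => openSquare_subset_square z (center_mem_openSquare z)
  rcases hT with rfl | rfl
  · exact eq_of_isPreconnected hF.isPreconnected (subset_biUnion_fgCells hF)
      (fun z hz => ⟨center z, hz.2, hcenter z⟩) hnear
  · exact eq_of_isPreconnected hB.isPreconnected (subset_biUnion_bgCells hB)
      (fun z hz => ⟨center z, hz.2, hcenter z⟩) hnear

variable (hFB : (F ∩ closure B).Nonempty)
include hFB

theorem above_mem_bgCells_of_isLeast {m b : Cell} (hm : m ∈ fgCells S F)
    (hmin : ∀ u ∈ fgCells S F, toLex m ≤ toLex u) (hb : b ∈ bgCells S B)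
    (hbm : toLex b < toLex m) : above m ∈ bgCells S B :=
  above_mem_of_isLeast disjoint_fgCells_bgCells
    (fun _ _ => columnParity_fgCells_bgCells_add_of_adj4 hrow hF hB)
    (columnParity_fgCells_bgCells_eq hrow hF hB _ (Or.inl rfl))
    (columnParity_fgCells_bgCells_eq hrow hF hB _ (Or.inr rfl))
    (fun _ => columnParity_eq_zero) (exists_adj4_of_inter_closure_nonempty hF hB hFB)
    hm hmin hb hbm

theorem above_mem_fgCells_of_isLeast {m f : Cell} (hm : m ∈ bgCells S B)
    (hmin : ∀ u ∈ bgCells S B, toLex m ≤ toLex u) (hf : f ∈ fgCells S F)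
    (hfm : toLex f < toLex m) : above m ∈ fgCells S F := by
  obtain ⟨f₀, hf₀, b₀, hb₀, h₀⟩ := exists_adj4_of_inter_closure_nonempty hF hB hFB
  refine above_mem_of_isLeast disjoint_fgCells_bgCells.symm
    (fun _ _ h => ?_) (columnParity_fgCells_bgCells_eq hrow hF hB _ (Or.inr rfl))
    (columnParity_fgCells_bgCells_eq hrow hF hB _ (Or.inl rfl))
    (fun _ hz => ?_) ⟨b₀, hb₀, f₀, hf₀, h₀.symm⟩ hm hmin hf hfm
  · rw [crossing_swap]; exact columnParity_fgCells_bgCells_add_of_adj4 hrow hF hB h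
  · rw [← columnParity_swap]; exact columnParity_eq_zero hz

end Separation

section Grid

variable {S : Set (ℕ × ℕ)} {h w : ℕ}

def box (h w : ℕ) : Set Cell := Icc 1 (h : ℤ) ×ˢ Icc 1 (w : ℤ)

/-- The background component containing everything outside the grid. -/
def outer (S : Set (ℕ × ℕ)) : Set Plane := connectedComponentIn (fg S)ᶜ (center (0, 0))

lemma cells_subset_box (hS : OnGrid S h w) : cells S ⊆ box h w := by
  rintro _ ⟨p, hp, rfl⟩
  obtain ⟨⟨h₁, h₂⟩, h₃, h₄⟩ := hS hp
  simp only [box, mem_prod, mem_Icc, Prod.map_fst, Prod.map_snd]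
  exact ⟨⟨by exact_mod_cast h₁, by exact_mod_cast h₂⟩, by exact_mod_cast h₃, by exact_mod_cast h₄⟩

lemma finite_box (h w : ℕ) : (box h w).Finite := (finite_Icc _ _).prod (finite_Icc _ _)

lemma isPreconnected_compl_rectangle (a b : ℝ) :
    IsPreconnected {x : Plane | x 0 < 0 ∨ a < x 0 ∨ x 1 < 0 ∨ b < x 1} := by
  have half : ∀ (i : Fin 2) (c : ℝ), IsPreconnected {x : Plane | x i < c} ∧
      IsPreconnected {x : Plane | c < x i} := fun i c =>
    let π : Plane →ₗ[ℝ] ℝ := LinearMap.proj i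
    ⟨((convex_Iio c).linear_preimage π).isPreconnected,
      ((convex_Ioi c).linear_preimage π).isPreconnected⟩
  have h₁₃ := (half 0 0).1.union ![-1, -1] (by simp) (by simp) (half 1 0).1
  have h₁₃₂ := h₁₃.union ![a + 1, -1] (by simp) (by simp) (half 0 a).2
  have h₁₃₂₄ := h₁₃₂.union ![-1, b + 1] (by simp) (by simp) (half 1 b).2
  convert h₁₃₂₄ using 1
  ext x
  simp only [mem_ofPred_eq, mem_union]
  tauto

lemma compl_rectangle_subset_compl_fg (hS : OnGrid S h w) :
    {x : Plane | x 0 < 0 ∨ h < x 0 ∨ x 1 < 0 ∨ w < x 1} ⊆ (fg S)ᶜ := by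
  intro x hx hxS
  rw [fg_eq_biUnion_square, mem_iUnion₂] at hxS
  obtain ⟨z, hz, ⟨hx₁, hx₂⟩, hx₃, hx₄⟩ := hxS
  obtain ⟨⟨hz₁, hz₂⟩, hz₃, hz₄⟩ := cells_subset_box hS hz
  have : (1 : ℝ) ≤ z.1 := by exact_mod_cast hz₁
  have : (z.1 : ℝ) ≤ h := by exact_mod_cast hz₂
  have : (1 : ℝ) ≤ z.2 := by exact_mod_cast hz₃
  have : (z.2 : ℝ) ≤ w := by exact_mod_cast hz₄
  rcases hx with hx | hx | hx | hx <;> linarith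

lemma compl_rectangle_subset_outer (hS : OnGrid S h w) :
    {x : Plane | x 0 < 0 ∨ h < x 0 ∨ x 1 < 0 ∨ w < x 1} ⊆ outer S :=
  (isPreconnected_compl_rectangle _ _).subset_connectedComponentIn
    (Or.inl (by norm_num [center])) (compl_rectangle_subset_compl_fg hS)

lemma isCompOf_outer (hS : OnGrid S h w) : IsCompOf (outer S) (fg S)ᶜ :=
  isCompOf_connectedComponentIn
    (compl_rectangle_subset_compl_fg hS (Or.inl (by norm_num [center])))

lemma mem_bgCells_outer (hS : OnGrid S h w) {z : Cell} (hz : z ∉ box h w) :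
    z ∈ bgCells S (outer S) := by
  refine ⟨fun hz' => hz (cells_subset_box hS hz'), compl_rectangle_subset_outer hS ?_⟩
  simp only [box, mem_prod, mem_Icc, not_and_or, not_le, Int.lt_iff_add_one_le] at hz
  simp only [center, mem_ofPred_eq, Matrix.cons_val_zero, Matrix.cons_val_one]
  rcases hz with (hz | hz) | (hz | hz)
  · have : (z.1 : ℝ) + 1 ≤ 1 := by exact_mod_cast hz
    left; linarith
  · have : (h : ℝ) + 1 ≤ z.1 := by exact_mod_cast hz
    right; left; linarith
  · have : (z.2 : ℝ) + 1 ≤ 1 := by exact_mod_cast hz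
    right; right; left; linarith
  · have : (w : ℝ) + 1 ≤ z.2 := by exact_mod_cast hz
    right; right; right; linarith

lemma bgCells_subset_box (hS : OnGrid S h w) {B : Set Plane} (hB : IsCompOf B (fg S)ᶜ)
    (hne : B ≠ outer S) : bgCells S B ⊆ box h w := fun _ hz => by_contra fun hz' =>
  hne (hB.eq_of_mem (isCompOf_outer hS) hz.2 (mem_bgCells_outer hS hz').2)

end Grid

section LexMin

variable {T : Set Cell} {z : Cell}

open Classical in
def lexMin (T : Set Cell) : WithBot (ℤ ×ₗ ℤ) :=
  if h : ∃ a, IsLeast (toLex '' T) a then h.choose else ⊥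

lemma lexMin_eq (hz : z ∈ T) (hmin : ∀ u ∈ T, toLex z ≤ toLex u) : lexMin T = toLex z := by
  have hz' : IsLeast (toLex '' T) (toLex z) := ⟨mem_image_of_mem _ hz, forall_mem_image.2 hmin⟩
  have h : ∃ a, IsLeast (toLex '' T) a := ⟨_, hz'⟩
  rw [lexMin, dif_pos h, h.choose_spec.unique hz']

lemma lexMin_le (hz : z ∈ T) : lexMin T ≤ toLex z := by
  unfold lexMin
  split_ifs with h
  · exact WithBot.coe_le_coe.2 (h.choose_spec.2 (mem_image_of_mem _ hz))
  · exact bot_le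

lemma lexMin_eq_bot (h : ∀ z ∈ T, ∃ u ∈ T, toLex u < toLex z) : lexMin T = ⊥ := by
  refine dif_neg ?_
  rintro ⟨_, ⟨z, hz, rfl⟩, hmin⟩
  obtain ⟨u, hu, hlt⟩ := h z hz
  exact (hmin (mem_image_of_mem _ hu)).not_gt hlt

end LexMin

section Vertices

variable {S : Set (ℕ × ℕ)} {h w : ℕ}

abbrev Vertex (S : Set (ℕ × ℕ)) : Type :=
  {C : Set Plane // IsCompOf C (fg S)} ⊕ {C : Set Plane // IsCompOf C (fg S)ᶜ}

def vertexCells (S : Set (ℕ × ℕ)) : Vertex S → Set Cell :=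
  Sum.elim (fun F => fgCells S F.1) (fun B => bgCells S B.1)

def outerVertex (hS : OnGrid S h w) : Vertex S := Sum.inr ⟨outer S, isCompOf_outer hS⟩

lemma eq_of_mem_vertexCells {u v : Vertex S} {z : Cell} (hu : z ∈ vertexCells S u)
    (hv : z ∈ vertexCells S v) : u = v := by
  rcases u with F | B <;> rcases v with F' | B'
  · exact congrArg Sum.inl (Subtype.ext (F.2.eq_of_mem F'.2 hu.2 hv.2))
  · exact (hv.1 hu.1).elim
  · exact (hu.1 hv.1).elim
  · exact congrArg Sum.inr (Subtype.ext (B.2.eq_of_mem B'.2 hu.2 hv.2))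

lemma vertexCells_nonempty (v : Vertex S) : (vertexCells S v).Nonempty := by
  rcases v with ⟨F, hF⟩ | ⟨B, hB⟩
  · obtain ⟨x, hx, rfl⟩ := hF
    obtain ⟨z, hz, -⟩ := mem_iUnion₂.1
      (subset_biUnion_fgCells ⟨x, hx, rfl⟩ (mem_connectedComponentIn hx))
    exact ⟨z, hz⟩
  · obtain ⟨x, hx, rfl⟩ := hB
    obtain ⟨z, hz, -⟩ := mem_iUnion₂.1
      (subset_biUnion_bgCells ⟨x, hx, rfl⟩ (mem_connectedComponentIn hx))
    exact ⟨z, hz⟩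

lemma vertexCells_subset_box (hS : OnGrid S h w) {v : Vertex S} (hv : v ≠ outerVertex hS) :
    vertexCells S v ⊆ box h w := by
  rcases v with F | ⟨B, hB⟩
  · exact fun z hz => cells_subset_box hS hz.1
  · exact bgCells_subset_box hS hB fun h' => hv (by subst h'; rfl)

lemma exists_isLeast_vertexCells (hS : OnGrid S h w) {v : Vertex S} (hv : v ≠ outerVertex hS) :
    ∃ m ∈ vertexCells S v, ∀ u ∈ vertexCells S v, toLex m ≤ toLex u :=
  (vertexCells_nonempty v).elim fun _ hz => exists_min_image _ toLex
    ((finite_box h w).subset (vertexCells_subset_box hS hv)) ⟨_, hz⟩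

lemma lexMin_outerVertex (hS : OnGrid S h w) : lexMin (vertexCells S (outerVertex hS)) = ⊥ := by
  refine lexMin_eq_bot fun z _ => ⟨(min z.1 0 - 1, z.2), mem_bgCells_outer hS ?_, ?_⟩
  · simp only [box, mem_prod, mem_Icc]; omega
  · exact Prod.Lex.toLex_lt_toLex.2 (Or.inl (by simp only; omega))

lemma exists_lt_of_lexMin_lt (hS : OnGrid S h w) {v : Vertex S} {m : Cell} (hm : m ∈ box h w)
    (hv : lexMin (vertexCells S v) < toLex m) : ∃ z ∈ vertexCells S v, toLex z < toLex m := by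
  by_cases hvo : v = outerVertex hS
  · refine ⟨(0, 0), hvo ▸ mem_bgCells_outer hS ?_, Prod.Lex.toLex_lt_toLex.2 (Or.inl ?_)⟩
    · simp [box]
    · exact lt_of_lt_of_le one_pos hm.1.1
  · obtain ⟨z, hz, hmin⟩ := exists_isLeast_vertexCells hS hvo
    exact ⟨z, hz, WithBot.coe_lt_coe.1 (lexMin_eq hz hmin ▸ hv)⟩

lemma lexMin_vertexCells_injective (hS : OnGrid S h w) :
    Function.Injective fun v => lexMin (vertexCells S v) := by
  intro u v huv
  simp only at huv
  by_cases hu : u = outerVertex hS <;> by_cases hv : v = outerVertex hS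
  · exact hu.trans hv.symm
  · obtain ⟨z, hz, hmin⟩ := exists_isLeast_vertexCells hS hv
    rw [hu, lexMin_outerVertex, lexMin_eq hz hmin] at huv
    exact (WithBot.bot_ne_coe huv).elim
  · obtain ⟨z, hz, hmin⟩ := exists_isLeast_vertexCells hS hu
    rw [hv, lexMin_outerVertex, lexMin_eq hz hmin] at huv
    exact (WithBot.coe_ne_bot huv).elim
  · obtain ⟨z, hz, hmin⟩ := exists_isLeast_vertexCells hS hu
    obtain ⟨z', hz', hmin'⟩ := exists_isLeast_vertexCells hS hv
    rw [lexMin_eq hz hmin, lexMin_eq hz' hmin', WithBot.coe_inj, toLex_inj] at huv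
    exact eq_of_mem_vertexCells hz (huv ▸ hz')

lemma finite_vertex (hS : OnGrid S h w) : Finite (Vertex S) := by
  have hfin : (range fun v => lexMin (vertexCells S v)).Finite := by
    refine (((finite_box h w).image fun z => ((toLex z : ℤ ×ₗ ℤ) : WithBot (ℤ ×ₗ ℤ))).insert
      ⊥).subset ?_
    rintro _ ⟨v, rfl⟩
    by_cases hv : v = outerVertex hS
    · exact Or.inl (hv ▸ lexMin_outerVertex hS)
    · obtain ⟨z, hz, hmin⟩ := exists_isLeast_vertexCells hS hv
      exact Or.inr ⟨z, vertexCells_subset_box hS hv hz, (lexMin_eq hz hmin).symm⟩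
  have := hfin.to_subtype
  exact Finite.of_injective_finite_range (lexMin_vertexCells_injective hS)

end Vertices

section Tree

variable {S : Set (ℕ × ℕ)} {h w : ℕ}

lemma fst_pos_of_onGrid (hS : OnGrid S h w) : ∀ p ∈ S, 0 < p.1 :=
  fun _ hp => (hS hp).1.1

/-- The parent of a vertex other than `outerVertex` is the component containing the cell above
its least cell. -/
theorem exists_adj_lexMin_lt (hS : OnGrid S h w) (v : Vertex S) (hv : v ≠ outerVertex hS) :
    ∃ p, (componentGraph S).Adj v p ∧
      lexMin (vertexCells S p) < lexMin (vertexCells S v) := by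
  obtain ⟨m, hm, hmin⟩ := exists_isLeast_vertexCells hS hv
  have hlt : ∀ p : Vertex S, above m ∈ vertexCells S p →
      lexMin (vertexCells S p) < lexMin (vertexCells S v) := fun p hp =>
    (lexMin_le hp).trans_lt (lexMin_eq hm hmin ▸ WithBot.coe_lt_coe.2 (toLex_above_lt m))
  have hnear := square_inter_nonempty_iff.2 (adj4_above m).symm.abs_sub_le
  rcases v with ⟨F, hF⟩ | ⟨B, hB⟩
  · have hn : above m ∉ cells S := fun hn =>
      (toLex_above_lt m).not_ge (hmin _ (mem_fgCells_of_square_inter hF hm hn hnear))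
    have hc : center (above m) ∈ (fg S)ᶜ := center_notMem_fg hn
    have hB := isCompOf_connectedComponentIn hc
    have hnB : above m ∈ bgCells S _ := ⟨hn, mem_connectedComponentIn hc⟩
    exact ⟨Sum.inr ⟨_, hB⟩, inter_closure_nonempty_of_adj4 hF hB hm hnB (adj4_above m).symm,
      hlt _ hnB⟩
  · have hn : above m ∈ cells S := by_contra fun hn =>
      (toLex_above_lt m).not_ge (hmin _ (mem_bgCells_of_adj4 hB hm hn (adj4_above m).symm))
    have hc : center (above m) ∈ fg S := center_mem_fg hn
    have hF := isCompOf_connectedComponentIn hc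
    have hnF : above m ∈ fgCells S _ := ⟨hn, mem_connectedComponentIn hc⟩
    exact ⟨Sum.inl ⟨_, hF⟩, inter_closure_nonempty_of_adj4 hF hB hnF hm (adj4_above m),
      hlt _ hnF⟩

/-- Every neighbour of `v` of smaller rank contains the cell above the least cell of `v`. -/
theorem eq_of_adj_of_lexMin_lt (hS : OnGrid S h w) {v p q : Vertex S}
    (hp : (componentGraph S).Adj v p) (hq : (componentGraph S).Adj v q)
    (hpv : lexMin (vertexCells S p) < lexMin (vertexCells S v))
    (hqv : lexMin (vertexCells S q) < lexMin (vertexCells S v)) : p = q := by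
  have hv : v ≠ outerVertex hS := fun hv => by
    rw [hv, lexMin_outerVertex] at hpv
    exact not_lt_bot hpv
  obtain ⟨m, hm, hmin⟩ := exists_isLeast_vertexCells hS hv
  suffices key : ∀ r, (componentGraph S).Adj v r →
      lexMin (vertexCells S r) < lexMin (vertexCells S v) → above m ∈ vertexCells S r from
    eq_of_mem_vertexCells (key p hp hpv) (key q hq hqv)
  intro r hr hrv
  rw [lexMin_eq hm hmin] at hrv
  obtain ⟨z, hz, hzm⟩ := exists_lt_of_lexMin_lt hS (vertexCells_subset_box hS hv hm) hrv
  rcases v with F | B <;> rcases r with F' | B'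
  · exact hr.elim
  · exact above_mem_bgCells_of_isLeast (fst_pos_of_onGrid hS) F.2 B'.2 hr hm hmin hz hzm
  · exact above_mem_fgCells_of_isLeast (fst_pos_of_onGrid hS) F'.2 B.2 hr hm hmin hz hzm
  · exact hr.elim

end Tree

end BinaryImage

/-- For every binary image `S`, the component graph of `S` is a tree. -/
theorem componentGraph_isTree
    (h w : ℕ) (S : Set (ℕ × ℕ)) (hS : OnGrid S h w) :
    (componentGraph S).IsTree := by
  have := BinaryImage.finite_vertex hS
  exact ⟨SimpleGraph.connected_of_exists_adj_lt _ _ (BinaryImage.exists_adj_lexMin_lt hS),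
    SimpleGraph.isAcyclic_of_eq_of_adj_lt _ (BinaryImage.lexMin_vertexCells_injective hS)
      fun _ _ _ => BinaryImage.eq_of_adj_of_lexMin_lt hS⟩

end
end

section
/- For binary images P and G on the same h×w grid and any real ε with 0 < ε < 1/4, the intersection of the topological frontiers frontier(F_ε(P)) ∩ frontier(F_{2ε}(G)) is a finite set. Consequently, for any connected component C of TP and any connected component D of TN the set closure(C) ∩ closure(D) is finite, and for any connected component C of FP and any connected component D of FN the set closure(C) ∩ closure(D) is finite. (This expresses that the combined component graph is bipartite, with edges only between correctly classified and incorrectly classified components.) -/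
open Set Metric

noncomputable section

namespace FrontierAux

/-- A closed axis-aligned rectangle. -/
def rect (a b c d : ℝ) : Set Plane := {x | x 0 ∈ Set.Icc a b ∧ x 1 ∈ Set.Icc c d}

lemma isClosed_rect (a b c d : ℝ) : IsClosed (rect a b c d) := by
  have : rect a b c d =
      (fun x : Plane => x 0) ⁻¹' Set.Icc a b ∩ (fun x : Plane => x 1) ⁻¹' Set.Icc c d := rfl
  rw [this]
  exact (isClosed_Icc.preimage (continuous_apply 0)).inter
    (isClosed_Icc.preimage (continuous_apply 1))

lemma clamp_prop {a b y ε : ℝ} (hε : 0 ≤ ε) (hab : a ≤ b) (h1 : a - ε ≤ y) (h2 : y ≤ b + ε) :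
    max a (min b y) ∈ Set.Icc a b ∧ |max a (min b y) - y| ≤ ε := by
  refine ⟨⟨le_max_left _ _, max_le hab (min_le_left _ _)⟩, ?_⟩
  rcases le_total y a with hya | hya
  · have hm : min b y = y := min_eq_right (hya.trans hab)
    rw [hm, max_eq_left hya, abs_of_nonneg (by linarith)]
    linarith
  · rcases le_total b y with hby | hby
    · have hm : min b y = b := min_eq_left hby
      rw [hm, max_eq_right hab, abs_of_nonpos (by linarith)]
      linarith
    · have hm : min b y = y := min_eq_right hby
      rw [hm, max_eq_right hya, sub_self, abs_zero]
      exact hε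

lemma thick_pixel {ε : ℝ} (hε : 0 ≤ ε) (p : ℕ × ℕ) :
    thick ε (pixel p) =
      rect ((p.1 : ℝ) - 1 - ε) ((p.1 : ℝ) + ε) ((p.2 : ℝ) - 1 - ε) ((p.2 : ℝ) + ε) := by
  ext y
  constructor
  · rintro ⟨x, ⟨⟨h1, h2⟩, h3, h4⟩, hx⟩
    have h0 : |x 0 - y 0| ≤ ε := by
      have := (norm_le_pi_norm (x - y) 0).trans hx
      simpa [Real.norm_eq_abs] using this
    have h1' : |x 1 - y 1| ≤ ε := by
      have := (norm_le_pi_norm (x - y) 1).trans hx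
      simpa [Real.norm_eq_abs] using this
    rw [abs_le] at h0 h1'
    exact ⟨⟨by linarith [h0.1, h0.2], by linarith [h0.1, h0.2]⟩,
      ⟨by linarith [h1'.1, h1'.2], by linarith [h1'.1, h1'.2]⟩⟩
  · rintro ⟨⟨ha1, ha2⟩, ⟨hb1, hb2⟩⟩
    have hab0 : ((p.1 : ℝ) - 1) ≤ (p.1 : ℝ) := by linarith
    have hab1 : ((p.2 : ℝ) - 1) ≤ (p.2 : ℝ) := by linarith
    obtain ⟨hc0, hd0⟩ := clamp_prop hε hab0 (by linarith) (by linarith) (y := y 0)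
    obtain ⟨hc1, hd1⟩ := clamp_prop hε hab1 (by linarith) (by linarith) (y := y 1)
    refine ⟨![max ((p.1 : ℝ) - 1) (min (p.1 : ℝ) (y 0)),
              max ((p.2 : ℝ) - 1) (min (p.2 : ℝ) (y 1))], ⟨?_, ?_⟩, ?_⟩
    · simpa using hc0
    · simpa using hc1
    · rw [pi_norm_le_iff_of_nonneg hε]
      intro i
      fin_cases i
      · simpa [Real.norm_eq_abs] using hd0
      · simpa [Real.norm_eq_abs] using hd1

lemma thick_fg {ε : ℝ} (hε : 0 ≤ ε) (S : Set (ℕ × ℕ)) :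
    thick ε (fg S) = ⋃ p ∈ S,
      rect ((p.1 : ℝ) - 1 - ε) ((p.1 : ℝ) + ε) ((p.2 : ℝ) - 1 - ε) ((p.2 : ℝ) + ε) := by
  have h1 : thick ε (fg S) = ⋃ p ∈ S, thick ε (pixel p) := by
    ext y
    simp only [thick, fg, Set.mem_iUnion, Set.mem_setOf_eq]
    constructor
    · rintro ⟨x, ⟨p, hp, hxp⟩, hn⟩
      exact ⟨p, hp, x, hxp, hn⟩
    · rintro ⟨p, hp, x, hxp, hn⟩
      exact ⟨x, ⟨p, hp, hxp⟩, hn⟩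
  rw [h1]
  exact Set.iUnion₂_congr fun p _ => thick_pixel hε p

/-- The set of possible boundary-line coordinates. -/
def ES (S : Set (ℕ × ℕ)) (ε : ℝ) : Set ℝ :=
  ⋃ p ∈ S, ({(p.1 : ℝ) - 1 - ε, (p.1 : ℝ) + ε, (p.2 : ℝ) - 1 - ε, (p.2 : ℝ) + ε} : Set ℝ)

lemma ES_finite {S : Set (ℕ × ℕ)} (hS : S.Finite) (ε : ℝ) : (ES S ε).Finite :=
  hS.biUnion fun _ _ => (Set.finite_singleton _).insert _ |>.insert _ |>.insert _

def lineSet (E : Set ℝ) : Set Plane := {x | x 0 ∈ E ∨ x 1 ∈ E}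

lemma frontier_thick_subset {ε : ℝ} (hε : 0 < ε) {S : Set (ℕ × ℕ)} (hS : S.Finite) :
    frontier (thick ε (fg S)) ⊆ lineSet (ES S ε) := by
  intro x hx
  have hU := thick_fg hε.le S
  have hclosed : IsClosed (thick ε (fg S)) := by
    rw [hU]; exact hS.isClosed_biUnion fun p _ => isClosed_rect _ _ _ _
  have hxU : x ∈ thick ε (fg S) := hclosed.closure_eq ▸ hx.1
  rw [hU] at hxU
  obtain ⟨p, hp, hxp⟩ := Set.mem_iUnion₂.mp hxU
  by_contra hcon
  simp only [lineSet, Set.mem_setOf_eq, not_or] at hcon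
  have hmem : ∀ t : ℝ, t ∈ ({(p.1 : ℝ) - 1 - ε, (p.1 : ℝ) + ε, (p.2 : ℝ) - 1 - ε,
      (p.2 : ℝ) + ε} : Set ℝ) → t ∈ ES S ε := fun t ht => Set.mem_biUnion hp ht
  obtain ⟨⟨ha1, ha2⟩, hb1, hb2⟩ := hxp
  have hx0a : x 0 ≠ (p.1 : ℝ) - 1 - ε := fun hh => hcon.1 (hh ▸ hmem _ (by simp))
  have hx0b : x 0 ≠ (p.1 : ℝ) + ε := fun hh => hcon.1 (hh ▸ hmem _ (by simp))
  have hx1a : x 1 ≠ (p.2 : ℝ) - 1 - ε := fun hh => hcon.2 (hh ▸ hmem _ (by simp))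
  have hx1b : x 1 ≠ (p.2 : ℝ) + ε := fun hh => hcon.2 (hh ▸ hmem _ (by simp))
  -- x is in the open rectangle, hence in the interior
  have hopen : IsOpen ((fun x : Plane => x 0) ⁻¹' Set.Ioo ((p.1 : ℝ) - 1 - ε) ((p.1 : ℝ) + ε) ∩
      (fun x : Plane => x 1) ⁻¹' Set.Ioo ((p.2 : ℝ) - 1 - ε) ((p.2 : ℝ) + ε)) :=
    (isOpen_Ioo.preimage (continuous_apply 0)).inter (isOpen_Ioo.preimage (continuous_apply 1))
  have hxint : x ∈ interior (thick ε (fg S)) := by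
    refine interior_maximal ?_ hopen ⟨⟨lt_of_le_of_ne ha1 (Ne.symm hx0a), lt_of_le_of_ne ha2 hx0b⟩,
      ⟨lt_of_le_of_ne hb1 (Ne.symm hx1a), lt_of_le_of_ne hb2 hx1b⟩⟩
    intro z hz
    rw [hU]
    exact Set.mem_biUnion hp ⟨⟨hz.1.1.le, hz.1.2.le⟩, ⟨hz.2.1.le, hz.2.2.le⟩⟩
  exact hx.2 hxint

lemma mem_ES {S : Set (ℕ × ℕ)} {ε t : ℝ} (h : t ∈ ES S ε) :
    ∃ k : ℤ, t = k + ε ∨ t = k - ε := by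
  simp only [ES, Set.mem_iUnion, Set.mem_insert_iff, Set.mem_singleton_iff] at h
  obtain ⟨p, _, h⟩ := h
  rcases h with h | h | h | h
  · exact ⟨(p.1 : ℤ) - 1, Or.inr (by push_cast; linarith)⟩
  · exact ⟨(p.1 : ℤ), Or.inl (by push_cast; linarith)⟩
  · exact ⟨(p.2 : ℤ) - 1, Or.inr (by push_cast; linarith)⟩
  · exact ⟨(p.2 : ℤ), Or.inl (by push_cast; linarith)⟩

lemma int_key (m : ℤ) (c : ℝ) (hmc : (m : ℝ) = c) (h0 : c ≠ 0) (h1 : -1 < c) (h2 : c < 1) :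
    False := by
  have hm1 : (m : ℝ) < 1 := hmc ▸ h2
  have hm2 : (-1 : ℝ) < (m : ℝ) := hmc ▸ h1
  have e1 : m < 1 := by exact_mod_cast hm1
  have e2 : -1 < m := by exact_mod_cast hm2
  have : m = 0 := by omega
  rw [this] at hmc
  exact h0 (by simpa using hmc.symm)

lemma ES_disjoint {ε : ℝ} (hε0 : 0 < ε) (hε : ε < 1 / 4) (P G : Set (ℕ × ℕ)) :
    ∀ t : ℝ, t ∈ ES P ε → t ∈ ES G (2 * ε) → False := by
  intro t h1 h2
  obtain ⟨k, hk⟩ := mem_ES h1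
  obtain ⟨l, hl⟩ := mem_ES h2
  rcases hk with hk | hk <;> rcases hl with hl | hl
  · exact int_key (k - l) ε (by push_cast; linarith) hε0.ne' (by linarith) (by linarith)
  · exact int_key (k - l) (-3 * ε) (by push_cast; linarith) (by nlinarith)
      (by linarith) (by linarith)
  · exact int_key (k - l) (3 * ε) (by push_cast; linarith) (by nlinarith)
      (by linarith) (by linarith)
  · exact int_key (k - l) (-ε) (by push_cast; linarith) (neg_ne_zero.mpr hε0.ne')
      (by linarith) (by linarith)

lemma lines_inter_finite {EP EG : Set ℝ} (hEP : EP.Finite) (hEG : EG.Finite)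
    (hdisj : ∀ t : ℝ, t ∈ EP → t ∈ EG → False) :
    (lineSet EP ∩ lineSet EG).Finite := by
  have hsub : lineSet EP ∩ lineSet EG ⊆
      (fun q : ℝ × ℝ => ![q.1, q.2]) '' ((EP ×ˢ EG) ∪ (EG ×ˢ EP)) := by
    rintro x ⟨h1, h2⟩
    have hx : (![x 0, x 1] : Plane) = x := by
      funext i; fin_cases i <;> rfl
    rcases h1 with h1 | h1 <;> rcases h2 with h2 | h2
    · exact absurd h2 fun h2 => hdisj _ h1 h2
    · exact ⟨(x 0, x 1), Or.inl ⟨h1, h2⟩, hx⟩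
    · exact ⟨(x 0, x 1), Or.inr ⟨h2, h1⟩, hx⟩
    · exact absurd h2 fun h2 => hdisj _ h1 h2
  exact (((hEP.prod hEG).union (hEG.prod hEP)).image _).subset hsub

lemma closure_inter_subset_frontier {A B C D : Set Plane}
    (hC : C ⊆ A ∩ B) (hD : D ⊆ Aᶜ ∩ Bᶜ) :
    closure C ∩ closure D ⊆ frontier A ∩ frontier B := by
  rintro x ⟨h1, h2⟩
  have hA1 : x ∈ closure A := closure_mono (hC.trans Set.inter_subset_left) h1
  have hB1 : x ∈ closure B := closure_mono (hC.trans Set.inter_subset_right) h1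
  have hA2 : x ∈ closure Aᶜ := closure_mono (hD.trans Set.inter_subset_left) h2
  have hB2 : x ∈ closure Bᶜ := closure_mono (hD.trans Set.inter_subset_right) h2
  rw [frontier_eq_closure_inter_closure, frontier_eq_closure_inter_closure]
  exact ⟨⟨hA1, hA2⟩, ⟨hB1, hB2⟩⟩

end FrontierAux

/-- The frontiers of the two thickened foregrounds intersect in a finite set;
consequently closures of `TP`/`TN` components intersect finitely, and closures of `FP`/`FN`
components intersect finitely (bipartiteness of the combined component graph). -/
theorem frontiers_intersect_finitely
    (h w : ℕ) (P G : Set (ℕ × ℕ)) (hP : OnGrid P h w) (hG : OnGrid G h w)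
    (ε : ℝ) (hε0 : 0 < ε) (hε : ε < 1 / 4) :
    (frontier (thick ε (fg P)) ∩ frontier (thick (2 * ε) (fg G))).Finite ∧
    (∀ C D : Set Plane, IsCompOf C (TPset P G ε) → IsCompOf D (TNset P G ε) →
      (closure C ∩ closure D).Finite) ∧
    (∀ C D : Set Plane, IsCompOf C (FPset P G ε) → IsCompOf D (FNset P G ε) →
      (closure C ∩ closure D).Finite) := by
  open FrontierAux in
  have hPfin : P.Finite := ((Set.finite_Icc 1 h).prod (Set.finite_Icc 1 w)).subset hP
  have hGfin : G.Finite := ((Set.finite_Icc 1 h).prod (Set.finite_Icc 1 w)).subset hG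
  have hε2 : (0 : ℝ) < 2 * ε := by linarith
  have hmain : (frontier (thick ε (fg P)) ∩ frontier (thick (2 * ε) (fg G))).Finite := by
    refine (lines_inter_finite (ES_finite hPfin ε) (ES_finite hGfin (2 * ε))
      (ES_disjoint hε0 hε P G)).subset ?_
    exact Set.inter_subset_inter (frontier_thick_subset hε0 hPfin)
      (frontier_thick_subset hε2 hGfin)
  refine ⟨hmain, ?_, ?_⟩
  · intro C D hC hD
    obtain ⟨x, hx, rfl⟩ := hC
    obtain ⟨y, hy, rfl⟩ := hD
    refine hmain.subset ((closure_inter_subset_frontier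
      (connectedComponentIn_subset _ _) ?_).trans (subset_refl _))
    exact connectedComponentIn_subset _ _
  · intro C D hC hD
    obtain ⟨x, hx, rfl⟩ := hC
    obtain ⟨y, hy, rfl⟩ := hD
    have hsub : closure (connectedComponentIn (FPset P G ε) x) ∩
        closure (connectedComponentIn (FNset P G ε) y) ⊆
        frontier (thick ε (fg P)) ∩ frontier ((thick (2 * ε) (fg G))ᶜ) := by
      refine closure_inter_subset_frontier ?_ ?_
      · exact connectedComponentIn_subset _ _
      · refine (connectedComponentIn_subset _ _).trans ?_
        rw [compl_compl]
        exact fun z hz => hz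
    refine hmain.subset (hsub.trans ?_)
    rw [frontier_compl]

end
end

section
/- Let X ⊆ ℝ² be a closed set and let D ⊆ ℝ² be a subset for which there exists a homeomorphism h from the closed unit disk D² = {x ∈ ℝ² : ‖x‖₂ ≤ 1} onto D (with their subspace topologies) such that X ∩ D = h({x ∈ ℝ² : ‖x‖₂ = 1 and x₂ ≥ 0}), the image of the closed upper boundary semicircle. Then X ∪ D strongly deformation retracts onto X. (This is Case 1 of the proof of the main proposition: a disk-shaped false-positive region glued to X along one boundary arc can be pushed onto X.) -/
/-!
Push the unit disk vertically onto its upper boundary semicircle,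
`(x₀, x₁) ↦ (x₀, (1 - t) x₁ + t √(1 - x₀²))`; this fixes the semicircle pointwise, since there
`x₁ = √(1 - x₀²)`. Transported along the homeomorphism it is a strong deformation retraction of
`D` onto `X ∩ D`, and extending it by the identity on `X` gives one of `X ∪ D` onto `X`: the
pasting is continuous because `X` and the compact set `D` are closed.
-/

open Set Metric

noncomputable section

open unitInterval

section StrongDeformationRetraction

variable {α β : Type*} [TopologicalSpace α] [TopologicalSpace β]

def IsStrongDeformationRetraction (H : C(α × I, α)) (A : Set α) : Prop :=
  (∀ x, H (x, 0) = x) ∧ (∀ x, H (x, 1) ∈ A) ∧ ∀ a ∈ A, ∀ t, H (a, t) = a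

theorem IsStrongDeformationRetraction.homeomorph_conj {H : C(α × I, α)} {A : Set α}
    (hH : IsStrongDeformationRetraction H A) (e : α ≃ₜ β) :
    IsStrongDeformationRetraction
      ((e : C(α, β)).comp (H.comp ((e.symm : C(β, α)).prodMap (ContinuousMap.id I))))
      (e.symm ⁻¹' A) := by
  obtain ⟨h0, h1, hA⟩ := hH
  refine ⟨fun y => ?_, fun y => ?_, fun b hb t => ?_⟩
  · simp [h0]
  · simpa using h1 (e.symm y)
  · simp [hA _ hb t]

theorem IsStrongDeformationRetraction.exists_union_of_isClosed {X D : Set α} (hX : IsClosed X)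
    (hD : IsClosed D) {H : C(D × I, D)}
    (hH : IsStrongDeformationRetraction H {d | (d : α) ∈ X}) :
    ∃ G : C(↥(X ∪ D) × I, ↥(X ∪ D)), IsStrongDeformationRetraction G {y | (y : α) ∈ X} := by
  classical
  obtain ⟨h0, h1, hfix⟩ := hH
  let F : ↥(X ∪ D) × I → α := fun p =>
    if h : (p.1 : α) ∈ D then H (⟨p.1, h⟩, p.2) else p.1
  have hF_of_mem_X : ∀ p : ↥(X ∪ D) × I, (p.1 : α) ∈ X → F p = p.1 := by
    rintro ⟨y, t⟩ hy
    by_cases h : (y : α) ∈ D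
    · simp [F, h, hfix ⟨y, h⟩ hy t]
    · simp [F, h]
  have hF_mem : ∀ p, F p ∈ X ∪ D := by
    rintro ⟨y, t⟩
    by_cases h : (y : α) ∈ D <;> simp [F, h]
  have hF_cont : Continuous F := by
    have hcover : {p : ↥(X ∪ D) × I | (p.1 : α) ∈ X} ∪ {p | (p.1 : α) ∈ D} = univ :=
      eq_univ_of_forall fun p => p.1.2
    rw [← continuousOn_univ, ← hcover]
    refine ContinuousOn.union_of_isClosed ?_ ?_ (hX.preimage (by fun_prop))
      (hD.preimage (by fun_prop))
    · exact (continuous_subtype_val.comp continuous_fst).continuousOn.congr hF_of_mem_X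
    · rw [continuousOn_iff_continuous_domRestrict]
      have hF_D : domRestrict {p | (p.1 : α) ∈ D} F =
          fun q => (H (⟨q.1.1, q.2⟩, q.1.2) : α) :=
        funext fun q => dif_pos q.2
      rw [hF_D]
      fun_prop
  refine ⟨⟨fun p => ⟨F p, hF_mem p⟩, hF_cont.subtype_mk _⟩, fun y => ?_, fun y => ?_,
    fun y hy t => Subtype.ext (hF_of_mem_X (y, t) hy)⟩
  · ext
    by_cases h : (y : α) ∈ D
    · simp [F, h, h0]
    · simp [F, h]
  · by_cases h : (y : α) ∈ D
    · simpa [F, h] using h1 ⟨y, h⟩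
    · simpa [F, h] using y.2.resolve_right h

end StrongDeformationRetraction

theorem EuclideanSpace.norm_sq_eq_fin_two (x : EuclideanSpace ℝ (Fin 2)) :
    ‖x‖ ^ 2 = x 0 ^ 2 + x 1 ^ 2 := by
  rw [EuclideanSpace.real_norm_sq_eq, Fin.sum_univ_two]

theorem abs_lineMap_le_of_abs_le {b s t : ℝ} (hb : |b| ≤ s) (ht₀ : 0 ≤ t) (ht₁ : t ≤ 1) :
    |(1 - t) * b + t * s| ≤ s := by
  rw [abs_le] at hb ⊢
  constructor <;> nlinarith

def upperSemicircle : Set EPlane := {x | ‖x‖ = 1 ∧ 0 ≤ x 1}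

def pushUp (x : EPlane) (t : ℝ) : EPlane :=
  !₂[x 0, (1 - t) * x 1 + t * √(1 - x 0 ^ 2)]

theorem pushUp_zero (x : EPlane) : pushUp x 0 = x := by
  ext i; fin_cases i <;> simp [pushUp]

theorem sq_add_sq_le_one_of_norm_le_one {x : EPlane} (hx : ‖x‖ ≤ 1) :
    x 0 ^ 2 + x 1 ^ 2 ≤ 1 := by
  rw [← EuclideanSpace.norm_sq_eq_fin_two]
  exact pow_le_one₀ (norm_nonneg x) hx

theorem norm_pushUp_le {x : EPlane} (hx : ‖x‖ ≤ 1) {t : ℝ} (ht₀ : 0 ≤ t) (ht₁ : t ≤ 1) :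
    ‖pushUp x t‖ ≤ 1 := by
  have hx' := sq_add_sq_le_one_of_norm_le_one hx
  set s := √(1 - x 0 ^ 2)
  have hs : s ^ 2 = 1 - x 0 ^ 2 := Real.sq_sqrt (by linarith [sq_nonneg (x 1)])
  have hmove := abs_lineMap_le_of_abs_le (b := x 1)
    (abs_le_of_sq_le_sq (by linarith) (Real.sqrt_nonneg _)) ht₀ ht₁
  have hsq := sq_le_sq' (abs_le.mp hmove).1 (abs_le.mp hmove).2
  rw [← sq_le_one_iff₀ (norm_nonneg _), EuclideanSpace.norm_sq_eq_fin_two]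
  simp only [Fin.isValue, pushUp, Matrix.cons_val_zero, Matrix.cons_val_one,
    Matrix.cons_val_fin_one]
  linarith

theorem pushUp_of_mem_upperSemicircle {x : EPlane} (hx : x ∈ upperSemicircle) (t : ℝ) :
    pushUp x t = x := by
  obtain ⟨hnorm, hx₁⟩ := hx
  have hx' : x 0 ^ 2 + x 1 ^ 2 = 1 := by
    rw [← EuclideanSpace.norm_sq_eq_fin_two, hnorm, one_pow]
  have hs : √(1 - x 0 ^ 2) = x 1 := by
    rw [show 1 - x 0 ^ 2 = x 1 ^ 2 by linarith, Real.sqrt_sq hx₁]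
  ext i; fin_cases i <;> simp [pushUp, hs]; ring

theorem pushUp_one_mem_upperSemicircle {x : EPlane} (hx : ‖x‖ ≤ 1) :
    pushUp x 1 ∈ upperSemicircle := by
  have hx' := sq_add_sq_le_one_of_norm_le_one hx
  refine ⟨?_, by simp [pushUp]⟩
  rw [← pow_eq_one_iff_of_nonneg (norm_nonneg _) two_ne_zero, EuclideanSpace.norm_sq_eq_fin_two]
  simp [pushUp, Real.sq_sqrt (by linarith [sq_nonneg (x 1)] : 0 ≤ 1 - x 0 ^ 2)]

def diskPushUp : C(closedBall (0 : EPlane) 1 × I, closedBall (0 : EPlane) 1) where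
  toFun p := ⟨pushUp p.1 p.2, mem_closedBall_zero_iff.mpr <|
    norm_pushUp_le (mem_closedBall_zero_iff.mp p.1.2) p.2.2.1 p.2.2.2⟩
  continuous_toFun := by unfold pushUp; fun_prop

theorem isStrongDeformationRetraction_diskPushUp :
    IsStrongDeformationRetraction diskPushUp (Subtype.val ⁻¹' upperSemicircle) :=
  ⟨fun x => Subtype.ext (pushUp_zero x),
    fun x => pushUp_one_mem_upperSemicircle (mem_closedBall_zero_iff.mp x.2),
    fun _ hx t => Subtype.ext (pushUp_of_mem_upperSemicircle hx t)⟩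

/-- If a closed set `X ⊆ ℝ²` meets a topological closed disk `D` exactly in
the image of the closed upper boundary semicircle, then `X ∪ D` strongly deformation
retracts onto `X`. -/
theorem union_with_disk_glued_along_arc_deformation_retracts
    (X D : Set Plane) (hX : IsClosed X)
    (e : ↥(Metric.closedBall (0 : EPlane) 1) ≃ₜ ↥D)
    (hXD : ∀ d : ↥D, ((d : Plane) ∈ X ↔
      ‖((e.symm d : ↥(Metric.closedBall (0 : EPlane) 1)) : EPlane)‖ = 1 ∧
      0 ≤ ((e.symm d : ↥(Metric.closedBall (0 : EPlane) 1)) : EPlane) 1)) :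
    SDR (X ∪ D) X := by
  have hD : IsClosed D := (isCompact_iff_compactSpace.mpr e.compactSpace).isClosed
  have hglue :
      e.symm ⁻¹' (Subtype.val ⁻¹' upperSemicircle) = {d : D | (d : Plane) ∈ X} := by
    ext d
    exact (hXD d).symm
  have hH := isStrongDeformationRetraction_diskPushUp.homeomorph_conj e
  rw [hglue] at hH
  obtain ⟨G, hG⟩ := hH.exists_union_of_isClosed hX hD
  exact ⟨G, hG⟩

end
end

section
/- Let X ⊆ ℝ² be a closed set and let A ⊆ ℝ² be a subset for which there exists a homeomorphism h from the closed annulus {x ∈ ℝ² : 1 ≤ ‖x‖₂ ≤ 2} onto A (with their subspace topologies) such that X ∩ A = h({x ∈ ℝ² : ‖x‖₂ = 2}), the image of the outer boundary circle. Then X ∪ A strongly deformation retracts onto X. (This is Case 2 of the proof of the main proposition: an annulus-shaped false-positive region glued to X along one boundary circle can be pushed through the annulus onto X.) -/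
open Set Metric

noncomputable section

/-! Push the annulus radially onto its outer circle by `x ↦ ((1 - t) + 2t/‖x‖) • x`, transport
this homotopy to `A` through the homeomorphism, and extend it by the identity on `X`. The two
pieces agree on `X ∩ A`, the image of the outer circle, and `X` and the compact set `A` are
closed, so the pasted homotopy is continuous. -/

open unitInterval

section StrongDeformationRetract

variable {α β : Type*} [TopologicalSpace α] [TopologicalSpace β]

def StrongDeformationRetractsOnto (Y X : Set α) : Prop :=
  ∃ H : C(↥Y × I, ↥Y), (∀ y, H (y, 0) = y) ∧ (∀ y, (H (y, 1) : α) ∈ X) ∧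
    ∀ y : ↥Y, (y : α) ∈ X → ∀ t, H (y, t) = y

theorem StrongDeformationRetractsOnto.homeomorph {Y S : Set α} {A X : Set β}
    (h : StrongDeformationRetractsOnto Y S) (e : ↥Y ≃ₜ ↥A)
    (hX : ∀ a : ↥A, (a : β) ∈ X ↔ (e.symm a : α) ∈ S) :
    StrongDeformationRetractsOnto A X := by
  obtain ⟨H, h0, h1, hfix⟩ := h
  refine ⟨⟨fun p ↦ e (H (e.symm p.1, p.2)), by fun_prop⟩, fun a ↦ ?_, fun a ↦ ?_, fun a ha t ↦ ?_⟩
  · simp [h0]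
  · simpa [hX] using h1 (e.symm a)
  · simp [hfix _ ((hX a).1 ha)]

theorem StrongDeformationRetractsOnto.union_of_isClosed {X A : Set α} (hX : IsClosed X)
    (hA : IsClosed A) (h : StrongDeformationRetractsOnto A X) :
    StrongDeformationRetractsOnto (X ∪ A) X := by
  classical
  obtain ⟨G, h0, h1, hfix⟩ := h
  let F : ↥(X ∪ A) × I → α := fun p ↦
    if hp : (p.1 : α) ∈ A then G (⟨p.1, hp⟩, p.2) else p.1
  have hF_of_mem : ∀ p : ↥(X ∪ A) × I, ∀ hp : (p.1 : α) ∈ A, F p = G (⟨p.1, hp⟩, p.2) :=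
    fun p hp ↦ dif_pos hp
  have hF_of_mem_X : ∀ p : ↥(X ∪ A) × I, (p.1 : α) ∈ X → F p = p.1 := by
    intro p hpX
    by_cases hp : (p.1 : α) ∈ A
    · rw [hF_of_mem p hp, hfix ⟨p.1, hp⟩ hpX]
    · exact dif_neg hp
  have hF_mem : ∀ p, F p ∈ X ∪ A := fun p ↦ by
    by_cases hp : (p.1 : α) ∈ A
    · exact (hF_of_mem p hp).symm ▸ Or.inr (G _).2
    · exact (hF_of_mem_X p (p.1.2.resolve_right hp)).symm ▸ p.1.2
  have hF_on_A : ContinuousOn F {p | (p.1 : α) ∈ A} := by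
    rw [continuousOn_iff_continuous_domRestrict]
    have : {p | (p.1 : α) ∈ A}.domRestrict F =
        fun q : ↥{p : ↥(X ∪ A) × I | (p.1 : α) ∈ A} ↦ (G (⟨q.1.1, q.2⟩, q.1.2) : α) :=
      funext fun q ↦ hF_of_mem q.1 q.2
    rw [this]
    fun_prop
  have hF_on_X : ContinuousOn F {p | (p.1 : α) ∈ X} :=
    (continuous_subtype_val.comp continuous_fst).continuousOn.congr fun p hp ↦ hF_of_mem_X p hp
  have hF : Continuous F := by
    rw [← continuousOn_univ]
    convert hF_on_X.union_of_isClosed hF_on_A (hX.preimage (by fun_prop))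
      (hA.preimage (by fun_prop))
    exact (eq_univ_of_forall fun p ↦ p.1.2).symm
  refine ⟨⟨fun p ↦ ⟨F p, hF_mem p⟩, hF.subtype_mk _⟩, fun y ↦ Subtype.ext ?_, fun y ↦ ?_,
    fun y hy t ↦ Subtype.ext (hF_of_mem_X (y, t) hy)⟩
  · change F (y, 0) = y
    by_cases hy : (y : α) ∈ A
    · rw [hF_of_mem (y, 0) hy, h0]
    · exact dif_neg hy
  · change F (y, 1) ∈ X
    by_cases hy : (y : α) ∈ A
    · exact (hF_of_mem (y, 1) hy).symm ▸ h1 _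
    · exact (hF_of_mem_X (y, 1) (y.2.resolve_right hy)).symm ▸ y.2.resolve_right hy

end StrongDeformationRetract

section Annulus

variable {E : Type*} [NormedAddCommGroup E]

theorem isCompact_annulus [ProperSpace E] (r R : ℝ) : IsCompact {x : E | r ≤ ‖x‖ ∧ ‖x‖ ≤ R} :=
  (isCompact_closedBall 0 R).of_isClosed_subset
    ((isClosed_le continuous_const continuous_norm).inter
      (isClosed_le continuous_norm continuous_const))
    fun _ hx ↦ mem_closedBall_zero_iff.2 hx.2

variable [NormedSpace ℝ E]

theorem norm_radial_interpolation {x : E} (hx : x ≠ 0) {R t : ℝ} (hR : 0 ≤ R) (ht : t ∈ I) :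
    ‖((1 - t) + t * R / ‖x‖) • x‖ = (1 - t) * ‖x‖ + t * R := by
  have hscale : 0 ≤ (1 - t) + t * R / ‖x‖ :=
    add_nonneg (sub_nonneg.2 ht.2) (div_nonneg (mul_nonneg ht.1 hR) (norm_nonneg x))
  rw [norm_smul, Real.norm_of_nonneg hscale, add_mul, div_mul_cancel₀ _ (norm_ne_zero_iff.2 hx)]

theorem strongDeformationRetractsOnto_annulus_sphere {r R : ℝ} (hr : 0 < r) :
    StrongDeformationRetractsOnto {x : E | r ≤ ‖x‖ ∧ ‖x‖ ≤ R} (sphere 0 R) := by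
  have hx₀ : ∀ x : ↥{x : E | r ≤ ‖x‖ ∧ ‖x‖ ≤ R}, (x : E) ≠ 0 := fun x ↦
    norm_pos_iff.1 (hr.trans_le x.2.1)
  have hnorm : ∀ (x : ↥{x : E | r ≤ ‖x‖ ∧ ‖x‖ ≤ R}) (t : I),
      ‖((1 - t) + t * R / ‖(x : E)‖) • (x : E)‖ = (1 - t) * ‖(x : E)‖ + t * R := fun x t ↦
    norm_radial_interpolation (hx₀ x) (hr.le.trans (x.2.1.trans x.2.2)) t.2
  refine ⟨⟨fun p ↦ ⟨((1 - p.2) + p.2 * R / ‖(p.1 : E)‖) • (p.1 : E), ?_⟩, ?_⟩, fun x ↦ ?_,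
    fun x ↦ ?_, fun x hx t ↦ ?_⟩
  · show r ≤ ‖_‖ ∧ ‖_‖ ≤ R
    rw [hnorm]
    obtain ⟨hxr, hxR⟩ := p.1.2
    constructor <;> nlinarith [p.2.2.1, p.2.2.2]
  · exact Continuous.subtype_mk
      (by fun_prop (disch := exact fun p ↦ norm_ne_zero_iff.2 (hx₀ p.1))) _
  · ext; simp
  · simpa using hnorm x 1
  · rw [mem_sphere_zero_iff_norm] at hx
    ext
    change ((1 - t) + t * R / ‖(x : E)‖) • (x : E) = x
    rw [mul_div_assoc, hx, div_self (hx ▸ norm_ne_zero_iff.2 (hx₀ x))]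
    simp

end Annulus

/-- If a closed set `X ⊆ ℝ²` meets a topological closed annulus `A` exactly
in the image of the outer boundary circle, then `X ∪ A` strongly deformation retracts
onto `X`. -/
theorem union_with_annulus_glued_along_outer_circle_deformation_retracts
    (X A : Set Plane) (hX : IsClosed X)
    (e : ↥{x : EPlane | 1 ≤ ‖x‖ ∧ ‖x‖ ≤ 2} ≃ₜ ↥A)
    (hXA : ∀ a : ↥A, ((a : Plane) ∈ X ↔
      ‖((e.symm a : ↥{x : EPlane | 1 ≤ ‖x‖ ∧ ‖x‖ ≤ 2}) : EPlane)‖ = 2)) :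
    SDR (X ∪ A) X := by
  have : CompactSpace ↥{x : EPlane | 1 ≤ ‖x‖ ∧ ‖x‖ ≤ 2} :=
    isCompact_iff_compactSpace.1 (isCompact_annulus 1 2)
  have hA : IsClosed A := (isCompact_iff_compactSpace.2 e.compactSpace).isClosed
  have hAX : StrongDeformationRetractsOnto A X :=
    (strongDeformationRetractsOnto_annulus_sphere one_pos).homeomorph e
      fun a ↦ (hXA a).trans mem_sphere_zero_iff_norm.symm
  exact hAX.union_of_isClosed hX hA

end
end
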